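/- arXiv:2207.01049 — 5 statements merged into one kernel-verified Lean document; each statement's English description precedes it below -/
import Mathlib

section
/- Let d ≥ 3 and n > (d+1)^2. If F is a maximal non-trivial d-wise intersecting family of (d+1)-element subsets of [n] and |F| > 3d(d+1), then F is isomorphic to H(d+1,d,2) or to H(d+1,d,3). -/
open Finset

attribute [local instance] Classical.propDecidable

/-- `F` is a family of `k`-element subsets of `[n] = {1,…,n}`. -/
def FamilyOn (n k : ℕ) (F : Finset (Finset ℕ)) : Prop :=
  ∀ A ∈ F, A ⊆ Finset.Icc 1 n ∧ A.card = k

/-- `F` is `d`-wise intersecting: any `d` members (with repetition allowed) have a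
common element. -/
def DWise (d : ℕ) (F : Finset (Finset ℕ)) : Prop :=
  ∀ f : Fin d → Finset ℕ, (∀ i, f i ∈ F) → ∃ x, ∀ i, x ∈ f i

/-- `F` is non-trivial: its members have no common element. -/
def NonTrivialFam (F : Finset (Finset ℕ)) : Prop :=
  ¬ ∃ x, ∀ A ∈ F, x ∈ A

/-- `F` is a maximal `d`-wise intersecting family of `k`-subsets of `[n]`:
adding any further `k`-subset of `[n]` destroys the `d`-wise intersecting property. -/
def MaximalFam (n k d : ℕ) (F : Finset (Finset ℕ)) : Prop :=
  ∀ A : Finset ℕ, A ⊆ Finset.Icc 1 n → A.card = k → A ∉ F →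
    ¬ DWise d (insert A F)

/-- Two families of subsets of `[n]` are isomorphic if some permutation of `[n]`
carries one onto the other. -/
def Iso (n : ℕ) (F F' : Finset (Finset ℕ)) : Prop :=
  ∃ π : Equiv.Perm ℕ, (∀ x ∈ Finset.Icc 1 n, π x ∈ Finset.Icc 1 n) ∧
    F.image (fun A => A.image π) = F'

/-- The family `H(k,d,l)` of `k`-subsets of `[n]`. -/
noncomputable def famH (n k d l : ℕ) : Finset (Finset ℕ) :=
  ((Finset.Icc 1 n).powersetCard k).filter (fun F =>
    (Finset.Icc 1 (d-1) ⊆ F ∧ (F ∩ Finset.Icc d (d+l-1)).Nonempty) ∨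
    ((F ∩ Finset.Icc 1 (d-1)).card = d-2 ∧ Finset.Icc d (d+l-1) ⊆ F))

/-- The family `G(k,d)` of `k`-subsets of `[n]`. -/
noncomputable def famG (n k d : ℕ) : Finset (Finset ℕ) :=
  ((Finset.Icc 1 n).powersetCard k).filter (fun F =>
    (Finset.Icc 1 (d-1) ⊆ F ∧ (F ∩ Finset.Icc d (k-1)).Nonempty) ∨
    (∃ i ∈ Finset.Icc (k+2) n, F = Finset.Icc 2 k ∪ {i}) ∨
    (Finset.Icc 1 (d-1) ∪ {k, k+1} ⊆ F) ∨
    (∃ i ∈ Finset.Icc (k+2) n, F = Finset.Icc 2 (k-1) ∪ {k+1, i}) ∨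
    ((F ∩ Finset.Icc 1 (d-1)).card = d-2 ∧ Finset.Icc d (k+1) ⊆ F))

/-- The family `S(k,3)` of `k`-subsets of `[n]`. -/
noncomputable def famS (n k : ℕ) : Finset (Finset ℕ) :=
  ((Finset.Icc 1 n).powersetCard k).filter (fun F =>
    (Finset.Icc 1 2 ⊆ F ∧ (F ∩ Finset.Icc 3 (k-1)).Nonempty) ∨
    (Finset.Icc 1 2 ∪ Finset.Icc k (k+2) ⊆ F) ∨
    (∃ i ∈ ({1, 2} : Finset ℕ), insert i (Finset.Icc 3 (k-1)) ⊆ F ∧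
      (F ∩ Finset.Icc k (k+2)).card = 2))

/-- The family `S1(k,3)` of `k`-subsets of `[n]`. -/
noncomputable def famS1 (n k : ℕ) : Finset (Finset ℕ) :=
  ((Finset.Icc 1 n).powersetCard k).filter (fun F =>
    ((Finset.Icc 1 2 ⊆ F ∧ (F ∩ Finset.Icc 3 (k-1)).Nonempty) ∨
      (Finset.Icc 1 2 ∪ Finset.Icc k (k+2) ⊆ F)) ∨
    (∃ i ∈ Finset.Icc (k+1) n, F = Finset.Icc 2 k ∪ {i}) ∨
    F = Finset.Icc 2 (k+2) \ {k} ∨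
    F = Finset.Icc 1 (k+1) \ {2} ∨
    F = Finset.Icc 1 (k+2) \ {2, k+1})

/-- The family `S2(k,3)` of `k`-subsets of `[n]`. -/
noncomputable def famS2 (n k : ℕ) : Finset (Finset ℕ) :=
  ((Finset.Icc 1 n).powersetCard k).filter (fun F =>
    ((Finset.Icc 1 2 ⊆ F ∧ (F ∩ Finset.Icc 3 (k-1)).Nonempty) ∨
      (Finset.Icc 1 2 ∪ Finset.Icc k (k+3) ⊆ F)) ∨
    F = Finset.Icc 2 (k+1) ∨
    F = Finset.Icc 2 (k-1) ∪ {k+2, k+3} ∨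
    F = Finset.Icc 2 k ∪ {k+3} ∨
    F = Finset.Icc 2 (k+2) \ {k} ∨
    F = Finset.Icc 3 k ∪ {1, k+2} ∨
    F = Finset.Icc 3 (k-1) ∪ {1, k+1, k+3})

/-- The family `S3(k,3)` of `k`-subsets of `[n]`. -/
noncomputable def famS3 (n k : ℕ) : Finset (Finset ℕ) :=
  ((Finset.Icc 1 n).powersetCard k).filter (fun F =>
    ((Finset.Icc 1 2 ⊆ F ∧ (F ∩ Finset.Icc 3 (k-1)).Nonempty) ∨
      (Finset.Icc 1 2 ∪ Finset.Icc k (k+3) ⊆ F)) ∨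
    F = Finset.Icc 2 k ∪ {k+2} ∨
    F = Finset.Icc 2 (k+2) \ {k} ∨
    F = Finset.Icc 2 (k-1) ∪ {k+1, k+3} ∨
    F = Finset.Icc 3 (k+1) ∪ {1} ∨
    F = Finset.Icc 3 (k-1) ∪ {1, k+1, k+2} ∨
    F = Finset.Icc 3 (k-1) ∪ {1, k+2, k+3})

/-- `n1(k,d) = d + 2(k-d)²(k^{k-d}-1)^k · k!`. -/
def nOne (k d : ℕ) : ℕ := d + 2 * (k - d)^2 * (k^(k-d) - 1)^k * Nat.factorial k

/-- `n2(k,d)`. -/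
def nTwo (k d : ℕ) : ℕ := if k = d + 1 then (d+1)^2 else nOne k d

/-- `D` is a Δ-system (sunflower) with kernel `X`. -/
def IsSunflower (D : Finset (Finset ℕ)) (X : Finset ℕ) : Prop :=
  ∀ A ∈ D, ∀ B ∈ D, A ≠ B → A ∩ B = X

/-- `B1(F)`: kernels `X ⊆ [n]` with `d ≤ |X| < k` of a Δ-system of size
`k^{|X|-d+1}` contained in `F`. -/
noncomputable def Bone (n k d : ℕ) (F : Finset (Finset ℕ)) : Finset (Finset ℕ) :=
  ((Finset.Icc 1 n).powerset).filter (fun X => d ≤ X.card ∧ X.card < k ∧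
    ∃ D ∈ F.powerset, D.card = k ^ (X.card - d + 1) ∧ IsSunflower D X)

/-- `B2(F)`: the minimal members of `B1(F)`. -/
noncomputable def Btwo (n k d : ℕ) (F : Finset (Finset ℕ)) : Finset (Finset ℕ) :=
  (Bone n k d F).filter (fun X => ∀ Y ∈ Bone n k d F, Y ⊆ X → Y = X)

/-- `B3(F)`: members of `F` containing no member of `B2(F)`. -/
noncomputable def Bthree (n k d : ℕ) (F : Finset (Finset ℕ)) : Finset (Finset ℕ) :=
  F.filter (fun A => ∀ X ∈ Btwo n k d F, ¬ X ⊆ A)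

/-- `B(F) = B2(F) ∪ B3(F)`. -/
noncomputable def famB (n k d : ℕ) (F : Finset (Finset ℕ)) : Finset (Finset ℕ) :=
  Btwo n k d F ∪ Bthree n k d F

/-- `B^{(i)}`: the members of `B(F)` of size `i`. -/
noncomputable def BI (n k d i : ℕ) (F : Finset (Finset ℕ)) : Finset (Finset ℕ) :=
  (famB n k d F).filter (fun T => T.card = i)

/-- `G` is `t`-intersecting. -/
def TInter (t : ℕ) (G : Finset (Finset ℕ)) : Prop :=
  ∀ A ∈ G, ∀ B ∈ G, t ≤ (A ∩ B).card

/-- The set of sizes of maximal non-trivial `d`-wise intersecting families of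
`k`-subsets of `[n]`. -/
def MNTSizes (n k d : ℕ) : Set ℕ :=
  {m | ∃ G : Finset (Finset ℕ), FamilyOn n k G ∧ DWise d G ∧ NonTrivialFam G ∧
        MaximalFam n k d G ∧ G.card = m}

/-- `m` is the `r`-th largest element of `S`. -/
def NthLargest (S : Set ℕ) (r m : ℕ) : Prop :=
  m ∈ S ∧ {x ∈ S | m < x}.ncard = r - 1

-- intersection of a nonempty finite family
noncomputable def iInterF (S : Finset (Finset ℕ)) (hS : S.Nonempty) : Finset ℕ :=
  S.inf' hS id

lemma mem_iInterF {S : Finset (Finset ℕ)} (hS : S.Nonempty) {x : ℕ} :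
    x ∈ iInterF S hS ↔ ∀ A ∈ S, x ∈ A := by
  constructor
  · intro hx A hA
    have := Finset.inf'_le (f := (id : Finset ℕ → Finset ℕ)) hA
    exact this hx
  · intro h
    have : {x} ≤ S.inf' hS id := by
      apply Finset.le_inf'
      intro A hA
      simpa [Finset.singleton_subset_iff] using h A hA
    simpa [iInterF, Finset.singleton_subset_iff] using this

-- from DWise: any at most d members have a common point
lemma dwise_inter {d : ℕ} {F : Finset (Finset ℕ)} (hInt : DWise d F)
    {S : Finset (Finset ℕ)} (hSF : S ⊆ F) (hS : S.Nonempty) (hcard : S.card ≤ d) :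
    ∃ x, ∀ A ∈ S, x ∈ A := by
  classical
  obtain ⟨A₀, hA₀⟩ := hS
  -- enumerate S
  have hl : S.toList ≠ [] := by
    simpa [Finset.toList_eq_nil] using Finset.ne_empty_of_mem hA₀
  set l := S.toList with hldef
  have hlen : l.length = S.card := Finset.length_toList S
  have hlenpos : 0 < l.length := List.length_pos_iff.mpr hl
  set f : Fin d → Finset ℕ := fun i => l.get ⟨min i (l.length - 1), by
    have : l.length - 1 < l.length := Nat.sub_lt hlenpos one_pos
    exact lt_of_le_of_lt (Nat.min_le_right _ _) this⟩ with hfdef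
  have hfF : ∀ i, f i ∈ F := by
    intro i
    apply hSF
    have : f i ∈ l := List.get_mem _ _
    simpa [hldef, Finset.mem_toList] using this
  obtain ⟨x, hx⟩ := hInt f hfF
  refine ⟨x, ?_⟩
  intro A hA
  have : A ∈ l := by simpa [hldef, Finset.mem_toList] using hA
  obtain ⟨j, hj⟩ := List.get_of_mem this
  have hjd : (j : ℕ) < d := lt_of_lt_of_le (by simpa [hlen] using j.2) hcard
  have hmin : min ((⟨j, hjd⟩ : Fin d) : ℕ) (l.length - 1) = (j : ℕ) := by
    simp only []
    have : (j : ℕ) ≤ l.length - 1 := Nat.le_sub_one_of_lt j.2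
    simpa using Nat.min_eq_left this
  have := hx ⟨j, hjd⟩
  rw [hfdef] at this
  simp only at this
  rw [← hj]
  convert this using 2
  exact (Fin.ext (by simp [hmin])).symm


lemma inter_insert {S : Finset (Finset ℕ)} (hS : S.Nonempty) (B : Finset ℕ) :
    iInterF (insert B S) (Finset.insert_nonempty B S) = B ∩ iInterF S hS := by
  ext x
  simp only [mem_iInterF, Finset.mem_inter, Finset.mem_insert]
  constructor
  · intro h
    exact ⟨h B (Or.inl rfl), fun A hA => h A (Or.inr hA)⟩
  · rintro ⟨hB, h⟩ A (rfl | hA)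
    · exact hB
    · exact h A hA

/-- Key lemma Q: any `m ≤ d` members of `F` (as a set) intersect in at least
`d+1-m` elements. -/
lemma Q_lemma {n d : ℕ} {F : Finset (Finset ℕ)}
    (hFam : FamilyOn n (d+1) F) (hInt : DWise d F) (hNT : NonTrivialFam F) :
    ∀ j, j ≤ d - 1 → ∀ S : Finset (Finset ℕ), S ⊆ F → ∀ hS : S.Nonempty,
      S.card ≤ d - j → j + 1 ≤ (iInterF S hS).card := by
  intro j
  induction j with
  | zero =>
    intro _ S hSF hS hcard
    obtain ⟨x, hx⟩ := dwise_inter hInt hSF hS (by simpa using hcard)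
    have : x ∈ iInterF S hS := (mem_iInterF hS).mpr hx
    exact Finset.card_pos.mpr ⟨x, this⟩
  | succ j ih =>
    intro hj S hSF hS hcard
    by_contra hcon
    push_neg at hcon
    have hIle : (iInterF S hS).card ≤ j + 1 := by omega
    have hsub : ∀ B ∈ F, iInterF S hS ⊆ B := by
      intro B hB
      have h1 : (insert B S).card ≤ d - j := by
        calc (insert B S).card ≤ S.card + 1 := Finset.card_insert_le _ _
        _ ≤ (d - (j+1)) + 1 := by omega
        _ ≤ d - j := by omega
      have h2 := ih (by omega) (insert B S) (by
        intro A hA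
        rcases Finset.mem_insert.mp hA with rfl | hA
        · exact hB
        · exact hSF hA) (Finset.insert_nonempty _ _) h1
      rw [inter_insert hS B] at h2
      have h3 : B ∩ iInterF S hS ⊆ iInterF S hS := Finset.inter_subset_right
      have h4 : B ∩ iInterF S hS = iInterF S hS :=
        Finset.eq_of_subset_of_card_le h3 (le_trans hIle h2)
      intro x hx
      have hx2 : x ∈ B ∩ iInterF S hS := by rw [h4]; exact hx
      exact (Finset.mem_inter.mp hx2).1
    have hne : (iInterF S hS).Nonempty := by
      have h2 := ih (by omega) S hSF hS (by omega)
      exact Finset.card_pos.mp (by omega)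
    obtain ⟨x, hx⟩ := hne
    exact hNT ⟨x, fun B hB => hsub B hB hx⟩

/-- Every member of F meets every intersection of at most d-1 members. -/
lemma cover_lemma {n d : ℕ} {F : Finset (Finset ℕ)}
    (hInt : DWise d F) {C : Finset ℕ} (hC : C ∈ F)
    {S : Finset (Finset ℕ)} (hSF : S ⊆ F) (hS : S.Nonempty) (hd : 1 ≤ d)
    (hcard : S.card ≤ d - 1) :
    (C ∩ iInterF S hS).Nonempty := by
  have h1 : (insert C S).card ≤ d := by
    calc (insert C S).card ≤ S.card + 1 := Finset.card_insert_le _ _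
    _ ≤ d := by omega
  obtain ⟨x, hx⟩ := dwise_inter hInt (S := insert C S) (by
    intro A hA
    rcases Finset.mem_insert.mp hA with rfl | hA
    · exact hC
    · exact hSF hA) (Finset.insert_nonempty _ _) h1
  refine ⟨x, Finset.mem_inter.mpr ⟨hx C (Finset.mem_insert_self _ _), ?_⟩⟩
  exact (mem_iInterF hS).mpr (fun A hA => hx A (Finset.mem_insert_of_mem hA))

/-- The closure property: any (d+1)-subset of [n] that is not in F fails to meet
some intersection of at most d-1 members of F. -/
lemma closure_lemma {n d : ℕ} {F : Finset (Finset ℕ)} (hd : 3 ≤ d)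
    (hInt : DWise d F) (hMax : MaximalFam n (d+1) d F)
    {X : Finset ℕ} (hXn : X ⊆ Finset.Icc 1 n) (hXcard : X.card = d+1) (hXF : X ∉ F) :
    ∃ S : Finset (Finset ℕ), S ⊆ F ∧ ∃ hS : S.Nonempty, S.card ≤ d - 1 ∧
      X ∩ iInterF S hS = ∅ := by
  classical
  have hnd := hMax X hXn hXcard hXF
  rw [DWise] at hnd
  push_neg at hnd
  obtain ⟨f, hf, hno⟩ := hnd
  set S : Finset (Finset ℕ) := (Finset.univ.image f).erase X with hSdef
  have hSF : S ⊆ F := by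
    intro A hA
    have h1 := Finset.mem_erase.mp hA
    obtain ⟨i, _, rfl⟩ := Finset.mem_image.mp h1.2
    rcases Finset.mem_insert.mp (hf i) with h | h
    · exact absurd h h1.1
    · exact h
  have hXne : X.Nonempty := Finset.card_pos.mp (by omega)
  have hS : S.Nonempty := by
    by_contra hemp
    rw [Finset.not_nonempty_iff_eq_empty] at hemp
    obtain ⟨x, hx⟩ := hXne
    obtain ⟨i, hi⟩ := hno x
    apply hi
    have : f i = X := by
      by_contra hne
      have h5 : f i ∈ S := Finset.mem_erase.mpr ⟨hne, Finset.mem_image.mpr ⟨i, Finset.mem_univ _, rfl⟩⟩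
      rw [hemp] at h5
      exact absurd h5 (Finset.notMem_empty _)
    rw [this]; exact hx
  refine ⟨S, hSF, hS, ?_, ?_⟩
  · -- card bound
    by_cases hXim : X ∈ Finset.univ.image f
    · have h1 : S.card = (Finset.univ.image f).card - 1 := Finset.card_erase_of_mem hXim
      have h2 : (Finset.univ.image f).card ≤ d := le_trans (Finset.card_image_le) (by simp)
      omega
    · -- then all f i ∈ F, contradiction with hInt
      exfalso
      have : ∀ i, f i ∈ F := by
        intro i
        rcases Finset.mem_insert.mp (hf i) with h | h
        · exact absurd (h ▸ Finset.mem_image.mpr ⟨i, Finset.mem_univ _, rfl⟩) hXim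
        · exact h
      obtain ⟨x, hx⟩ := hInt f this
      obtain ⟨i, hi⟩ := hno x
      exact hi (hx i)
  · -- empty intersection
    by_contra hne
    rw [← Ne, ← Finset.nonempty_iff_ne_empty] at hne
    obtain ⟨x, hx⟩ := hne
    have hxX : x ∈ X := (Finset.mem_inter.mp hx).1
    have hxI : ∀ A ∈ S, x ∈ A := (mem_iInterF hS).mp (Finset.mem_inter.mp hx).2
    obtain ⟨i, hi⟩ := hno x
    apply hi
    by_cases h : f i = X
    · rw [h]; exact hxX
    · exact hxI (f i) (Finset.mem_erase.mpr ⟨h, Finset.mem_image.mpr ⟨i, Finset.mem_univ _, rfl⟩⟩)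

/-- A permutation stabilizing a finset maps it onto itself; so does its inverse. -/
lemma perm_inv_stab {S : Finset ℕ} {π : Equiv.Perm ℕ} (h : ∀ x ∈ S, π x ∈ S) :
    ∀ x ∈ S, π.symm x ∈ S := by
  classical
  have himg : S.image π = S := by
    apply Finset.eq_of_subset_of_card_le
    · intro y hy
      obtain ⟨x, hx, rfl⟩ := Finset.mem_image.mp hy
      exact h x hx
    · rw [Finset.card_image_of_injective _ π.injective]
  intro x hx
  rw [← himg] at hx
  obtain ⟨y, hy, hyx⟩ := Finset.mem_image.mp hx
  have : π.symm x = y := by rw [← hyx]; simp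
  rw [this]; exact hy

/-- Extend a partial injection on a finset T into S to a permutation of ℕ
stabilizing S and fixing the complement of S. -/
lemma exists_perm_extend (S : Finset ℕ) :
    ∀ (T : Finset ℕ) (g : ℕ → ℕ), T ⊆ S → Set.InjOn g T →
    (∀ x ∈ T, g x ∈ S) →
    ∃ π : Equiv.Perm ℕ, (∀ x ∈ S, π x ∈ S) ∧ (∀ x ∉ S, π x = x) ∧
      ∀ x ∈ T, π x = g x := by
  classical
  intro T
  induction T using Finset.induction with
  | empty =>
    intro g _ _ _
    exact ⟨1, by simp, by simp, by simp⟩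
  | @insert a T ha ih =>
    intro g hTS hinj himg
    obtain ⟨π', h1, h2, h3⟩ := ih g (fun x hx => hTS (Finset.mem_insert_of_mem hx))
      (hinj.mono (by intro x hx; exact Finset.mem_insert_of_mem hx))
      (fun x hx => himg x (Finset.mem_insert_of_mem hx))
    set b := π'.symm (g a) with hb
    refine ⟨π' * Equiv.swap a b, ?_, ?_, ?_⟩
    · intro x hx
      simp only [Equiv.Perm.mul_apply]
      have haS : a ∈ S := hTS (Finset.mem_insert_self _ _)
      have hbS : b ∈ S := perm_inv_stab h1 _ (himg a (Finset.mem_insert_self _ _))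
      rcases eq_or_ne x a with rfl | hxa
      · rw [Equiv.swap_apply_left]; exact h1 _ hbS
      · rcases eq_or_ne x b with rfl | hxb
        · rw [Equiv.swap_apply_right]; exact h1 _ haS
        · rw [Equiv.swap_apply_of_ne_of_ne hxa hxb]; exact h1 _ hx
    · intro x hx
      simp only [Equiv.Perm.mul_apply]
      have haS : a ∈ S := hTS (Finset.mem_insert_self _ _)
      have hbS : b ∈ S := perm_inv_stab h1 _ (himg a (Finset.mem_insert_self _ _))
      have hxa : x ≠ a := fun h => hx (h ▸ haS)
      have hxb : x ≠ b := fun h => hx (h ▸ hbS)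
      rw [Equiv.swap_apply_of_ne_of_ne hxa hxb]
      exact h2 x hx
    · intro x hx
      simp only [Equiv.Perm.mul_apply]
      rcases Finset.mem_insert.mp hx with rfl | hxT
      · rw [Equiv.swap_apply_left, hb]; simp
      · have hxa : x ≠ a := fun h => ha (h ▸ hxT)
        have hxb : x ≠ b := by
          intro h
          have : π' x = g a := by rw [h, hb]; simp
          rw [h3 x hxT] at this
          have := hinj (Finset.mem_insert_of_mem hxT) (Finset.mem_insert_self a T) this
          exact hxa this
        rw [Equiv.swap_apply_of_ne_of_ne hxa hxb]
        exact h3 x hxT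

def ShapeForm (d : ℕ) (K L X : Finset ℕ) : Prop :=
  (K ⊆ X ∧ (X ∩ L).Nonempty) ∨ ((X ∩ K).card = d-2 ∧ L ⊆ X)

noncomputable def ShapeFam (n d : ℕ) (K L : Finset ℕ) : Finset (Finset ℕ) :=
  ((Finset.Icc 1 n).powersetCard (d+1)).filter (fun X => ShapeForm d K L X)

lemma famH_eq_shape (n d l : ℕ) :
    famH n (d+1) d l = ShapeFam n d (Finset.Icc 1 (d-1)) (Finset.Icc d (d+l-1)) := by
  unfold famH ShapeFam ShapeForm
  congr!

lemma shape_image {n d : ℕ} (π : Equiv.Perm ℕ)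
    (hπ : ∀ x ∈ Finset.Icc 1 n, π x ∈ Finset.Icc 1 n)
    {K L K' L' : Finset ℕ}
    (hKimg : K.image π = K') (hLimg : L.image π = L') :
    (ShapeFam n d K L).image (fun A => A.image π) = ShapeFam n d K' L' := by
  classical
  have hπinv := perm_inv_stab hπ
  have himg_inter : ∀ (A B : Finset ℕ), (A ∩ B).image π = A.image π ∩ B.image π :=
    fun A B => Finset.image_inter A B π.injective
  have hmem : ∀ X : Finset ℕ, X ∈ ShapeFam n d K L → X.image π ∈ ShapeFam n d K' L' := by
    intro X hX
    rw [ShapeFam, Finset.mem_filter, Finset.mem_powersetCard] at hX ⊢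
    obtain ⟨⟨hXn, hXc⟩, hform⟩ := hX
    refine ⟨⟨?_, ?_⟩, ?_⟩
    · intro y hy
      obtain ⟨x, hx, rfl⟩ := Finset.mem_image.mp hy
      exact hπ x (hXn hx)
    · rw [Finset.card_image_of_injective _ π.injective]; exact hXc
    · rcases hform with ⟨h1, h2⟩ | ⟨h1, h2⟩
      · left
        constructor
        · rw [← hKimg]; exact Finset.image_subset_image h1
        · rw [← hLimg, ← himg_inter]
          exact h2.image π
      · right
        constructor
        · rw [← hKimg, ← himg_inter, Finset.card_image_of_injective _ π.injective]
          exact h1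
        · rw [← hLimg]; exact Finset.image_subset_image h2
  apply Finset.Subset.antisymm
  · intro Y hY
    obtain ⟨X, hX, rfl⟩ := Finset.mem_image.mp hY
    exact hmem X hX
  · intro Y hY
    rw [Finset.mem_image]
    refine ⟨Y.image (π.symm : ℕ → ℕ), ?_, ?_⟩
    · have hKimg' : K'.image (π.symm : ℕ → ℕ) = K := by
        rw [← hKimg, Finset.image_image]
        simp
      have hLimg' : L'.image (π.symm : ℕ → ℕ) = L := by
        rw [← hLimg, Finset.image_image]
        simp
      rw [ShapeFam, Finset.mem_filter, Finset.mem_powersetCard] at hY ⊢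
      obtain ⟨⟨hXn, hXc⟩, hform⟩ := hY
      refine ⟨⟨?_, ?_⟩, ?_⟩
      · intro y hy
        obtain ⟨x, hx, rfl⟩ := Finset.mem_image.mp hy
        exact hπinv x (hXn hx)
      · rw [Finset.card_image_of_injective _ π.symm.injective]; exact hXc
      · have himg_inter' : ∀ (A B : Finset ℕ),
            (A ∩ B).image (π.symm : ℕ → ℕ) = A.image (π.symm : ℕ → ℕ) ∩ B.image (π.symm : ℕ → ℕ) :=
          fun A B => Finset.image_inter A B π.symm.injective
        rcases hform with ⟨h1, h2⟩ | ⟨h1, h2⟩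
        · left
          constructor
          · rw [← hKimg']; exact Finset.image_subset_image h1
          · rw [← hLimg', ← himg_inter']
            exact h2.image _
        · right
          constructor
          · rw [← hKimg', ← himg_inter',
              Finset.card_image_of_injective _ π.symm.injective]
            exact h1
          · rw [← hLimg']; exact Finset.image_subset_image h2
    · rw [Finset.image_image]
      simp

lemma exists_perm_two (n : ℕ) (K L K' L' : Finset ℕ)
    (hK : K ⊆ Finset.Icc 1 n) (hL : L ⊆ Finset.Icc 1 n)
    (hK' : K' ⊆ Finset.Icc 1 n) (hL' : L' ⊆ Finset.Icc 1 n)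
    (hKL : Disjoint K L) (hKL' : Disjoint K' L')
    (hcK : K.card = K'.card) (hcL : L.card = L'.card) :
    ∃ π : Equiv.Perm ℕ, (∀ x ∈ Finset.Icc 1 n, π x ∈ Finset.Icc 1 n) ∧
      K.image π = K' ∧ L.image π = L' := by
  classical
  have eK := Finset.equivOfCardEq hcK
  have eL := Finset.equivOfCardEq hcL
  set g : ℕ → ℕ := fun x =>
    if hx : x ∈ K then (eK ⟨x, hx⟩ : ℕ)
    else if hx : x ∈ L then (eL ⟨x, hx⟩ : ℕ) else x with hgdef
  have hgK : ∀ x (hx : x ∈ K), g x = (eK ⟨x, hx⟩ : ℕ) := by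
    intro x hx; simp [hgdef, hx]
  have hgL : ∀ x (hx : x ∈ L), g x = (eL ⟨x, hx⟩ : ℕ) := by
    intro x hx
    have hxK : x ∉ K := fun h => (Finset.disjoint_left.mp hKL) h hx
    simp [hgdef, hx, hxK]
  have hgKmem : ∀ x ∈ K, g x ∈ K' := by
    intro x hx; rw [hgK x hx]; exact (eK ⟨x, hx⟩).2
  have hgLmem : ∀ x ∈ L, g x ∈ L' := by
    intro x hx; rw [hgL x hx]; exact (eL ⟨x, hx⟩).2
  have hinj : Set.InjOn g (K ∪ L : Finset ℕ) := by
    intro x hx y hy hxy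
    simp only [Finset.coe_union, Set.mem_union, Finset.mem_coe] at hx hy
    rcases hx with hx | hx <;> rcases hy with hy | hy
    · rw [hgK x hx, hgK y hy] at hxy
      have := eK.injective (Subtype.coe_injective hxy)
      exact Subtype.mk_eq_mk.mp this
    · exfalso
      rw [hgK x hx] at hxy
      have h1 : g y ∈ L' := hgLmem y hy
      rw [← hxy] at h1
      exact (Finset.disjoint_left.mp hKL') (eK ⟨x, hx⟩).2 h1
    · exfalso
      rw [hgK y hy] at hxy
      have h1 : g x ∈ L' := hgLmem x hx
      rw [hxy] at h1
      exact (Finset.disjoint_left.mp hKL') (eK ⟨y, hy⟩).2 h1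
    · rw [hgL x hx, hgL y hy] at hxy
      have := eL.injective (Subtype.coe_injective hxy)
      exact Subtype.mk_eq_mk.mp this
  obtain ⟨π, hπS, _, hπg⟩ := exists_perm_extend (Finset.Icc 1 n) (K ∪ L) g
    (Finset.union_subset hK hL) hinj
    (by
      intro x hx
      rcases Finset.mem_union.mp hx with hx | hx
      · exact hK' (hgKmem x hx)
      · exact hL' (hgLmem x hx))
  refine ⟨π, hπS, ?_, ?_⟩
  · have h1 : K.image π = K.image g := by
      apply Finset.image_congr
      intro x hx
      exact hπg x (Finset.mem_union_left _ hx)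
    rw [h1]
    apply Finset.eq_of_subset_of_card_le
    · intro y hy
      obtain ⟨x, hx, rfl⟩ := Finset.mem_image.mp hy
      exact hgKmem x hx
    · rw [Finset.card_image_of_injOn (hinj.mono (by
        intro x hx
        simp only [Finset.coe_union, Set.mem_union, Finset.mem_coe]
        exact Or.inl hx))]
      omega
  · have h1 : L.image π = L.image g := by
      apply Finset.image_congr
      intro x hx
      exact hπg x (Finset.mem_union_right _ hx)
    rw [h1]
    apply Finset.eq_of_subset_of_card_le
    · intro y hy
      obtain ⟨x, hx, rfl⟩ := Finset.mem_image.mp hy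
      exact hgLmem x hx
    · rw [Finset.card_image_of_injOn (hinj.mono (by
        intro x hx
        simp only [Finset.coe_union, Set.mem_union, Finset.mem_coe]
        exact Or.inr hx))]
      omega

/-- If every member of `F` has the H-shape w.r.t. `(K, L)`, then by maximality
`F` is the full shape family. -/
lemma shape_closed {n d : ℕ} {F : Finset (Finset ℕ)} (hd : 3 ≤ d)
    (hFam : FamilyOn n (d+1) F) (hInt : DWise d F) (hNT : NonTrivialFam F)
    (hMax : MaximalFam n (d+1) d F)
    {K L : Finset ℕ} (hKcard : K.card = d-1) (hL2 : 2 ≤ L.card)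
    (hform : ∀ C ∈ F, ShapeForm d K L C) :
    F = ShapeFam n d K L := by
  classical
  apply Finset.Subset.antisymm
  · intro C hC
    rw [ShapeFam, Finset.mem_filter, Finset.mem_powersetCard]
    exact ⟨⟨(hFam C hC).1, (hFam C hC).2⟩, hform C hC⟩
  · intro X hX
    rw [ShapeFam, Finset.mem_filter, Finset.mem_powersetCard] at hX
    obtain ⟨⟨hXn, hXc⟩, hXform⟩ := hX
    by_contra hXF
    obtain ⟨S, hSF, hS, hScard, hSempty⟩ := closure_lemma hd hInt hMax hXn hXc hXF
    -- classify members of S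
    set S₂ := S.filter (fun C => ¬ K ⊆ C) with hS2def
    set S₁ := S.filter (fun C => K ⊆ C) with hS1def
    have hclass2 : ∀ C ∈ S₂, (C ∩ K).card = d-2 ∧ L ⊆ C := by
      intro C hC
      have h1 := Finset.mem_filter.mp hC
      rcases hform C (hSF h1.1) with ⟨h, _⟩ | h
      · exact absurd h h1.2
      · exact h
    have hclass1 : ∀ C ∈ S₁, K ⊆ C ∧ (C ∩ L).Nonempty := by
      intro C hC
      have h1 := Finset.mem_filter.mp hC
      rcases hform C (hSF h1.1) with h | ⟨h2, h3⟩
      · exact h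
      · exfalso
        have : (C ∩ K).card = K.card := by
          rw [Finset.inter_comm, Finset.inter_eq_left.mpr h1.2]
        omega
    have hpart : S₂.card + S₁.card = S.card := by
      have := Finset.card_filter_add_card_filter_not (s := S) (p := fun C => K ⊆ C)
      rw [hS2def, hS1def]
      omega
    -- the union of misses
    set B := S₂.biUnion (fun C => K \ C) with hBdef
    have hBcard : B.card ≤ S₂.card := by
      calc B.card ≤ ∑ C ∈ S₂, (K \ C).card := Finset.card_biUnion_le
      _ ≤ ∑ C ∈ S₂, 1 := by
          apply Finset.sum_le_sum
          intro C hC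
          have h1 := (hclass2 C hC).1
          have h2 := Finset.card_sdiff_add_card_inter K C
          have h3 : (K ∩ C).card = d-2 := by rw [Finset.inter_comm]; exact h1
          omega
      _ = S₂.card := by simp
    have hget : ∀ x, x ∈ X → (∀ C ∈ S, x ∈ C) → False := by
      intro x hxX hxS
      have : x ∈ X ∩ iInterF S hS := Finset.mem_inter.mpr ⟨hxX, (mem_iInterF hS).mpr hxS⟩
      rw [hSempty] at this
      exact absurd this (Finset.notMem_empty x)
    have hmemK : ∀ x ∈ K, x ∉ B → ∀ C ∈ S, x ∈ C := by
      intro x hxK hxB C hC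
      by_cases h : K ⊆ C
      · exact h hxK
      · have hC2 : C ∈ S₂ := Finset.mem_filter.mpr ⟨hC, h⟩
        by_contra hxC
        exact hxB (Finset.mem_biUnion.mpr ⟨C, hC2, Finset.mem_sdiff.mpr ⟨hxK, hxC⟩⟩)
    rcases hXform with ⟨hKX, hXL⟩ | ⟨hXK, hLX⟩
    · -- X of type 1
      by_cases hs : S₂.card ≤ d-2
      · -- there is a surviving element of K
        have : (K \ B).Nonempty := by
          apply Finset.card_pos.mp
          have := Finset.le_card_sdiff B K
          omega
        obtain ⟨x, hx⟩ := this
        have hx1 := Finset.mem_sdiff.mp hx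
        exact hget x (hKX hx1.1) (hmemK x hx1.1 hx1.2)
      · -- S₂.card = d-1, so S₁ empty, all of S contains L
        have hS1 : S₁ = ∅ := by
          apply Finset.card_eq_zero.mp
          omega
        obtain ⟨x, hx⟩ := hXL
        have hx1 := Finset.mem_inter.mp hx
        apply hget x hx1.1
        intro C hC
        have hC2 : C ∈ S₂ := by
          by_contra h
          have : C ∈ S₁ := by
            rw [hS1def, Finset.mem_filter]
            refine ⟨hC, ?_⟩
            by_contra h2
            exact h (Finset.mem_filter.mpr ⟨hC, h2⟩)
          rw [hS1] at this
          exact absurd this (Finset.notMem_empty C)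
        exact (hclass2 C hC2).2 hx1.2
    · -- X of type 2
      by_cases hs : S₂.card ≤ d-3
      · have : (K \ (B ∪ (K \ X))).Nonempty := by
          apply Finset.card_pos.mp
          have h1 : (B ∪ (K \ X)).card ≤ B.card + (K \ X).card := Finset.card_union_le _ _
          have h2 := Finset.card_sdiff_add_card_inter K X
          have h3 : (K ∩ X).card = d-2 := by rw [Finset.inter_comm]; exact hXK
          have h4 := Finset.le_card_sdiff (B ∪ (K \ X)) K
          omega
        obtain ⟨x, hx⟩ := this
        have hx1 := Finset.mem_sdiff.mp hx
        have hx2 : x ∉ B := fun h => hx1.2 (Finset.mem_union_left _ h)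
        have hx3 : x ∈ X := by
          by_contra h
          exact hx1.2 (Finset.mem_union_right _ (Finset.mem_sdiff.mpr ⟨hx1.1, h⟩))
        exact hget x hx3 (hmemK x hx1.1 hx2)
      · -- S₂.card ≥ d-2, so S₁.card ≤ 1
        have hS1le : S₁.card ≤ 1 := by omega
        by_cases ht : S₁ = ∅
        · -- all of S contains L; pick x ∈ L
          have : L.Nonempty := Finset.card_pos.mp (by omega)
          obtain ⟨x, hx⟩ := this
          apply hget x (hLX hx)
          intro C hC
          have hC2 : C ∈ S₂ := by
            by_contra h
            have : C ∈ S₁ := Finset.mem_filter.mpr ⟨hC, by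
              by_contra h2
              exact h (Finset.mem_filter.mpr ⟨hC, h2⟩)⟩
            rw [ht] at this
            exact absurd this (Finset.notMem_empty C)
          exact (hclass2 C hC2).2 hx
        · -- S₁ has exactly one member C₀
          obtain ⟨C₀, hC₀⟩ := Finset.nonempty_iff_ne_empty.mpr ht
          obtain ⟨x, hx⟩ := (hclass1 C₀ hC₀).2
          have hx1 := Finset.mem_inter.mp hx
          apply hget x (hLX hx1.2)
          intro C hC
          by_cases h : C ∈ S₂
          · exact (hclass2 C h).2 hx1.2
          · have hCS1 : C ∈ S₁ := Finset.mem_filter.mpr ⟨hC, by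
              by_contra h2
              exact h (Finset.mem_filter.mpr ⟨hC, h2⟩)⟩
            have : C = C₀ := by
              have := Finset.card_le_one.mp hS1le
              exact this C hCS1 C₀ hC₀
            rw [this]
            exact hx1.1

lemma main_of_structure {n d : ℕ} {F : Finset (Finset ℕ)} (hd : 3 ≤ d)
    (hn : (d+1)^2 < n)
    (hFam : FamilyOn n (d+1) F) (hInt : DWise d F) (hNT : NonTrivialFam F)
    (hMax : MaximalFam n (d+1) d F)
    (h : ∃ K L : Finset ℕ, K ⊆ Finset.Icc 1 n ∧ L ⊆ Finset.Icc 1 n ∧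
      Disjoint K L ∧ K.card = d-1 ∧ (L.card = 2 ∨ L.card = 3) ∧
      ∀ C ∈ F, ShapeForm d K L C) :
    Iso n F (famH n (d+1) d 2) ∨ Iso n F (famH n (d+1) d 3) := by
  classical
  obtain ⟨K, L, hKn, hLn, hdisj, hKcard, hL23, hform⟩ := h
  have hdn : d + 2 ≤ n := by nlinarith
  have hFeq : F = ShapeFam n d K L :=
    shape_closed hd hFam hInt hNT hMax hKcard (by omega) hform
  set l := L.card with hl
  have hK'sub : Finset.Icc 1 (d-1) ⊆ Finset.Icc 1 n :=
    Finset.Icc_subset_Icc le_rfl (by omega)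
  have hL'sub : Finset.Icc d (d+l-1) ⊆ Finset.Icc 1 n :=
    Finset.Icc_subset_Icc (by omega) (by omega)
  have hK'card : (Finset.Icc 1 (d-1)).card = d - 1 := by
    rw [Nat.card_Icc]; omega
  have hL'card : (Finset.Icc d (d+l-1)).card = l := by
    rw [Nat.card_Icc]; omega
  have hdisj' : Disjoint (Finset.Icc 1 (d-1)) (Finset.Icc d (d+l-1)) := by
    rw [Finset.disjoint_left]
    intro x hx hx2
    rw [Finset.mem_Icc] at hx hx2
    omega
  obtain ⟨π, hπ, hKimg, hLimg⟩ := exists_perm_two n K L (Finset.Icc 1 (d-1))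
    (Finset.Icc d (d+l-1)) hKn hLn hK'sub hL'sub hdisj hdisj'
    (by omega) (by omega)
  have hiso : Iso n F (famH n (d+1) d l) := by
    refine ⟨π, hπ, ?_⟩
    rw [hFeq, shape_image π hπ hKimg hLimg, famH_eq_shape]
  rcases hL23 with h2 | h3
  · left; rw [← h2]; exact hiso
  · right; rw [← h3]; exact hiso

lemma iInterF_pair (A B : Finset ℕ) :
    iInterF {A, B} (by simp) = A ∩ B := by
  ext x
  rw [mem_iInterF]
  simp [Finset.mem_insert]

/-- Pairwise intersections have size at least d-1. -/
lemma pairwise_inter {n d : ℕ} {F : Finset (Finset ℕ)} (hd : 3 ≤ d)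
    (hFam : FamilyOn n (d+1) F) (hInt : DWise d F) (hNT : NonTrivialFam F)
    {A B : Finset ℕ} (hA : A ∈ F) (hB : B ∈ F) :
    d - 1 ≤ (A ∩ B).card := by
  have h := Q_lemma hFam hInt hNT (d-2) (by omega) {A, B}
    (by intro C hC; rcases Finset.mem_insert.mp hC with rfl | hC
        · exact hA
        · rw [Finset.mem_singleton.mp hC]; exact hB)
    (by simp) (le_trans (Finset.card_insert_le _ _) (by rw [Finset.card_singleton]; omega))
  rw [iInterF_pair] at h
  omega

/-- Selection lemma: a set of "special" members with pairwise distinct misses has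
T-parts intersecting in ≥ 2 elements outside K (stated via the full intersection). -/
lemma selection_lemma {n d : ℕ} {F : Finset (Finset ℕ)} (hd : 3 ≤ d)
    (hFam : FamilyOn n (d+1) F) (hInt : DWise d F) (hNT : NonTrivialFam F)
    {K : Finset ℕ} (hKcard : K.card = d-1)
    {S : Finset (Finset ℕ)} (hSF : S ⊆ F) (hS : S.Nonempty) (hScard : S.card ≤ d-1)
    (hmiss : ∀ C ∈ S, (K \ C).card = 1)
    (hdist : ∀ C ∈ S, ∀ C' ∈ S, C ≠ C' → K \ C ≠ K \ C') :
    2 ≤ ((iInterF S hS) \ K).card := by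
  -- |⋂S| ≥ d+1-|S|, and |⋂S ∩ K| = (d-1) - |S|
  have hs1 : 1 ≤ S.card := Finset.card_pos.mpr hS
  have hQ := Q_lemma hFam hInt hNT (d - S.card) (by omega) S hSF hS (by omega)
  have hK : ((iInterF S hS) ∩ K).card + S.card ≤ K.card := by
    -- the misses are distinct singletons inside K avoiding the intersection
    classical
    have hinj : Set.InjOn (fun C => K \ C) S := by
      intro C hC C' hC' h
      by_contra hne
      exact hdist C hC C' hC' hne h
    have himg : (S.image (fun C => K \ C)).card = S.card :=
      Finset.card_image_of_injOn hinj
    -- ⋃ of misses ⊆ K \ ⋂S, and they are disjoint singletons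
    have hsub : S.biUnion (fun C => K \ C) ⊆ K \ (iInterF S hS ∩ K) := by
      intro x hx
      obtain ⟨C, hC, hxC⟩ := Finset.mem_biUnion.mp hx
      have h1 := Finset.mem_sdiff.mp hxC
      refine Finset.mem_sdiff.mpr ⟨h1.1, ?_⟩
      intro hmem
      have := (mem_iInterF hS).mp (Finset.mem_inter.mp hmem).1 C hC
      exact h1.2 this
    have hcard1 : S.card ≤ (S.biUnion (fun C => K \ C)).card := by
      have : ∀ C ∈ S, ∀ C' ∈ S, C ≠ C' → Disjoint (K \ C) (K \ C') := by
        intro C hC C' hC' hne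
        have h1 := hmiss C hC
        have h2 := hmiss C' hC'
        obtain ⟨x, hx⟩ := Finset.card_eq_one.mp h1
        obtain ⟨y, hy⟩ := Finset.card_eq_one.mp h2
        rw [hx, hy]
        have hxy : x ≠ y := by
          intro h
          apply hdist C hC C' hC' hne
          rw [hx, hy, h]
        exact Finset.disjoint_singleton.mpr hxy
      rw [Finset.card_biUnion this]
      have : ∀ C ∈ S, 1 ≤ (K \ C).card := by
        intro C hC; rw [hmiss C hC]
      calc S.card = ∑ C ∈ S, 1 := by simp
      _ ≤ ∑ C ∈ S, (K \ C).card := Finset.sum_le_sum this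
    have hcard2 := Finset.card_le_card hsub
    have hcard3 : (K \ (iInterF S hS ∩ K)).card = K.card - (iInterF S hS ∩ K).card := by
      rw [Finset.card_sdiff_of_subset Finset.inter_subset_right]
    have hle : (iInterF S hS ∩ K).card ≤ K.card :=
      Finset.card_le_card Finset.inter_subset_right
    omega
  have hsplit : (iInterF S hS).card = ((iInterF S hS) ∩ K).card + ((iInterF S hS) \ K).card := by
    rw [Finset.card_inter_add_card_sdiff]
  omega

lemma popular_K {n d : ℕ} {F : Finset (Finset ℕ)} (hd : 3 ≤ d)
    (hFam : FamilyOn n (d+1) F) (hInt : DWise d F) (hNT : NonTrivialFam F)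
    (hCard : 3*d*(d+1) < F.card) :
    ∃ K : Finset ℕ, K ⊆ Finset.Icc 1 n ∧ K.card = d-1 ∧
      6 < (F.filter (fun C => K ⊆ C)).card := by
  classical
  have hFne : F.Nonempty := Finset.card_pos.mp (by omega)
  obtain ⟨A₀, hA₀⟩ := hFne
  have hsel : ∀ C, ∃ K', (C ∈ F → (K' ⊆ C ∩ A₀ ∧ K'.card = d-1)) := by
    intro C
    by_cases hC : C ∈ F
    · have h1 : d - 1 ≤ (C ∩ A₀).card := pairwise_inter hd hFam hInt hNT hC hA₀
      obtain ⟨K', hK1, hK2⟩ := Finset.exists_subset_card_eq h1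
      exact ⟨K', fun _ => ⟨hK1, hK2⟩⟩
    · exact ⟨∅, fun h => absurd h hC⟩
  choose φ hφ using hsel
  have hmaps : ∀ C ∈ F, φ C ∈ (A₀.powersetCard (d-1)) := by
    intro C hC
    rw [Finset.mem_powersetCard]
    exact ⟨le_trans (hφ C hC).1 Finset.inter_subset_right, (hφ C hC).2⟩
  have htcard : (A₀.powersetCard (d-1)).card * 6 < F.card := by
    rw [Finset.card_powersetCard, (hFam A₀ hA₀).2]
    have h0 : (d+1).choose (d-1) = (d+1).choose 2 := by
      rw [show d-1 = d+1-2 from by omega, Nat.choose_symm (by omega : 2 ≤ d+1)]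
    rw [h0, Nat.choose_two_right]
    have heven : Even ((d+1) * (d+1-1)) := by
      have := Nat.even_mul_succ_self d
      simpa [Nat.mul_comm, Nat.succ_sub_one] using this
    have h2 : (d+1) * (d+1-1) / 2 * 2 = (d+1) * (d+1-1) := Nat.div_mul_cancel heven.two_dvd
    have h3 : (d+1) * (d+1-1) / 2 * 6 = 3*d*(d+1) := by
      calc (d+1) * (d+1-1) / 2 * 6 = ((d+1) * (d+1-1) / 2 * 2) * 3 := by ring
      _ = ((d+1) * (d+1-1)) * 3 := by rw [h2]
      _ = 3*d*(d+1) := by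
          rw [Nat.succ_sub_one]
          ring
    omega
  obtain ⟨K, hKt, hKfib⟩ :=
    Finset.exists_lt_card_fiber_of_mul_lt_card_of_maps_to hmaps htcard
  rw [Finset.mem_powersetCard] at hKt
  refine ⟨K, le_trans hKt.1 (hFam A₀ hA₀).1, hKt.2, ?_⟩
  calc 6 < (F.filter (fun C => φ C = K)).card := hKfib
  _ ≤ (F.filter (fun C => K ⊆ C)).card := by
      apply Finset.card_le_card
      intro C hC
      rw [Finset.mem_filter] at hC ⊢
      refine ⟨hC.1, ?_⟩
      rw [← hC.2]
      exact le_trans (hφ C hC.1).1 Finset.inter_subset_left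

/-- Every member contains at least d-2 elements of a popular K. -/
lemma member_K_inter {n d : ℕ} {F : Finset (Finset ℕ)} (hd : 3 ≤ d)
    (hFam : FamilyOn n (d+1) F) (hInt : DWise d F) (hNT : NonTrivialFam F)
    {K : Finset ℕ} (hKcard : K.card = d-1)
    (hpop : 6 < (F.filter (fun C => K ⊆ C)).card)
    {C : Finset ℕ} (hC : C ∈ F) : d - 2 ≤ (C ∩ K).card := by
  classical
  set E := F.filter (fun C => K ⊆ C) with hEdef
  -- every popular member M: either M \ K ⊆ C, contributing a pair
  by_contra hcon
  push_neg at hcon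
  have hsub : ∀ M ∈ E, M \ K ⊆ C := by
    intro M hM
    rw [hEdef, Finset.mem_filter] at hM
    have hMcard : M.card = d+1 := (hFam M hM.1).2
    have hpw := pairwise_inter hd hFam hInt hNT hC hM.1
    have hsplit : (C ∩ M).card = (C ∩ K).card + (C ∩ (M \ K)).card := by
      rw [← Finset.card_union_of_disjoint]
      · congr 1
        ext x
        simp only [Finset.mem_inter, Finset.mem_union, Finset.mem_sdiff]
        constructor
        · rintro ⟨hx1, hx2⟩
          by_cases h : x ∈ K
          · exact Or.inl ⟨hx1, h⟩
          · exact Or.inr ⟨hx1, hx2, h⟩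
        · rintro (⟨hx1, hx2⟩ | ⟨hx1, hx2, _⟩)
          · exact ⟨hx1, hM.2 hx2⟩
          · exact ⟨hx1, hx2⟩
      · rw [Finset.disjoint_left]
        intro x hx hx3
        exact (Finset.mem_sdiff.mp (Finset.mem_inter.mp hx3).2).2 (Finset.mem_inter.mp hx).2
    have hMK : (M \ K).card = 2 := by
      rw [Finset.card_sdiff_of_subset hM.2]
      omega
    have h2 : 2 ≤ (C ∩ (M \ K)).card := by omega
    have h3 : C ∩ (M \ K) = M \ K :=
      Finset.eq_of_subset_of_card_le Finset.inter_subset_right (by omega)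
    rw [← h3]
    exact Finset.inter_subset_left
  -- so E injects into pairs of C \ K which has ≤ 4 elements
  have hCK : (C \ K).card ≤ 4 := by
    have h1 : (C ∩ K).card + (C \ K).card = C.card := Finset.card_inter_add_card_sdiff C K
    have h2 : C.card = d + 1 := (hFam C hC).2
    -- (C∩K).card ≥ d-3 automatically from one popular member
    have hEne : E.Nonempty := Finset.card_pos.mp (by omega)
    obtain ⟨M, hM⟩ := hEne
    have hM' := Finset.mem_filter.mp hM
    have hpw := pairwise_inter hd hFam hInt hNT hC hM'.1
    have hMcard : M.card = d+1 := (hFam M hM'.1).2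
    have hsplit : (C ∩ M).card ≤ (C ∩ K).card + 2 := by
      have hMK : (M \ K).card = 2 := by
        rw [Finset.card_sdiff_of_subset hM'.2]
        omega
      have : C ∩ M ⊆ (C ∩ K) ∪ (M \ K) := by
        intro x hx
        have hx1 := Finset.mem_inter.mp hx
        by_cases h : x ∈ K
        · exact Finset.mem_union_left _ (Finset.mem_inter.mpr ⟨hx1.1, h⟩)
        · exact Finset.mem_union_right _ (Finset.mem_sdiff.mpr ⟨hx1.2, h⟩)
      calc (C ∩ M).card ≤ ((C ∩ K) ∪ (M \ K)).card := Finset.card_le_card this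
      _ ≤ (C ∩ K).card + (M \ K).card := Finset.card_union_le _ _
      _ = (C ∩ K).card + 2 := by omega
    omega
  have hinj : Set.InjOn (fun M => M \ K) E := by
    intro M hM M' hM' h
    have h1 := (Finset.mem_filter.mp hM).2
    have h2 := (Finset.mem_filter.mp hM').2
    have : K ∪ (M \ K) = K ∪ (M' \ K) := by
      have h' : M \ K = M' \ K := h
      rw [h']
    rwa [Finset.union_sdiff_of_subset h1, Finset.union_sdiff_of_subset h2] at this
  have hmaps : ∀ M ∈ E, M \ K ∈ (C \ K).powersetCard 2 := by
    intro M hM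
    rw [Finset.mem_powersetCard]
    have h1 := (Finset.mem_filter.mp hM).2
    have hMcard : M.card = d+1 := (hFam M (Finset.mem_filter.mp hM).1).2
    constructor
    · intro x hx
      exact Finset.mem_sdiff.mpr ⟨hsub M hM hx, (Finset.mem_sdiff.mp hx).2⟩
    · rw [Finset.card_sdiff_of_subset h1]; omega
  have hle : E.card ≤ ((C \ K).powersetCard 2).card := by
    rw [← Finset.card_image_of_injOn hinj]
    apply Finset.card_le_card
    intro P hP
    obtain ⟨M, hM, rfl⟩ := Finset.mem_image.mp hP
    exact hmaps M hM
  have : ((C \ K).powersetCard 2).card ≤ 6 := by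
    rw [Finset.card_powersetCard]
    calc (C \ K).card.choose 2 ≤ (4).choose 2 := Nat.choose_le_choose 2 hCK
    _ = 6 := by decide
  omega

lemma type2_cards {n d : ℕ} {F : Finset (Finset ℕ)} (hd : 3 ≤ d)
    (hFam : FamilyOn n (d+1) F) (hInt : DWise d F) (hNT : NonTrivialFam F)
    {K : Finset ℕ} (hKcard : K.card = d-1)
    (hpop : 6 < (F.filter (fun C => K ⊆ C)).card)
    {C : Finset ℕ} (hC : C ∈ F) (hnsub : ¬ K ⊆ C) :
    (C ∩ K).card = d-2 ∧ (K \ C).card = 1 ∧ (C \ K).card = 3 := by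
  have h1 := member_K_inter hd hFam hInt hNT hKcard hpop hC
  have h2 : (C ∩ K).card ≤ d - 2 := by
    by_contra h
    push_neg at h
    have h3 : (C ∩ K).card ≤ K.card := Finset.card_le_card Finset.inter_subset_right
    have h4 : (C ∩ K).card = K.card := by omega
    have h5 : C ∩ K = K := Finset.eq_of_subset_of_card_le Finset.inter_subset_right (by omega)
    exact hnsub (fun x hx => by
      rw [← h5] at hx
      exact (Finset.mem_inter.mp hx).1)
  have heq : (C ∩ K).card = d-2 := by omega
  have h6 : (K \ C).card + (K ∩ C).card = K.card := Finset.card_sdiff_add_card_inter K C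
  have h7 : (K ∩ C).card = d-2 := by rw [Finset.inter_comm]; exact heq
  have h8 : (C \ K).card + (C ∩ K).card = C.card := Finset.card_sdiff_add_card_inter C K
  have h9 : C.card = d+1 := (hFam C hC).2
  exact ⟨heq, by omega, by omega⟩

lemma miss_exists {n d : ℕ} {F : Finset (Finset ℕ)} (hd : 3 ≤ d)
    (hFam : FamilyOn n (d+1) F) (hInt : DWise d F) (hNT : NonTrivialFam F)
    {K : Finset ℕ} (hKcard : K.card = d-1)
    (hpop : 6 < (F.filter (fun C => K ⊆ C)).card)
    {e : ℕ} (he : e ∈ K) :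
    ∃ C ∈ F, ¬ K ⊆ C ∧ K \ C = {e} := by
  have h1 : ∃ C ∈ F, e ∉ C := by
    by_contra h
    push_neg at h
    exact hNT ⟨e, h⟩
  obtain ⟨C, hC, heC⟩ := h1
  have hnsub : ¬ K ⊆ C := fun h => heC (h he)
  refine ⟨C, hC, hnsub, ?_⟩
  have h2 := (type2_cards hd hFam hInt hNT hKcard hpop hC hnsub).2.1
  have h3 : e ∈ K \ C := Finset.mem_sdiff.mpr ⟨he, heC⟩
  obtain ⟨x, hx⟩ := Finset.card_eq_one.mp h2
  rw [hx] at h3 ⊢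
  rw [Finset.mem_singleton.mp h3]

lemma cross_core {n d : ℕ} {F : Finset (Finset ℕ)} (hd : 3 ≤ d)
    (hFam : FamilyOn n (d+1) F) (hInt : DWise d F) (hNT : NonTrivialFam F)
    {K : Finset ℕ} (hKcard : K.card = d-1)
    (hpop : 6 < (F.filter (fun C => K ⊆ C)).card)
    {C C' : Finset ℕ} (hC : C ∈ F) (hC' : C' ∈ F)
    (hnsub : ¬ K ⊆ C) (hnsub' : ¬ K ⊆ C') (hdm : K \ C ≠ K \ C') :
    2 ≤ ((C \ K) ∩ (C' \ K)).card ∧ (C \ K ≠ C' \ K → ((C \ K) ∩ (C' \ K)).card = 2) := by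
  have t1 := type2_cards hd hFam hInt hNT hKcard hpop hC hnsub
  have t2 := type2_cards hd hFam hInt hNT hKcard hpop hC' hnsub'
  have hpw := pairwise_inter hd hFam hInt hNT hC hC'
  obtain ⟨e, he⟩ := Finset.card_eq_one.mp t1.2.1
  obtain ⟨e', he'⟩ := Finset.card_eq_one.mp t2.2.1
  have hee' : e ≠ e' := by
    intro h
    apply hdm
    rw [he, he', h]
  -- C∩C'∩K ⊆ K \ {e,e'}
  have hsub : (C ∩ C') ∩ K ⊆ K \ {e, e'} := by
    intro x hx
    have hx1 := Finset.mem_inter.mp hx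
    have hx2 := Finset.mem_inter.mp hx1.1
    refine Finset.mem_sdiff.mpr ⟨hx1.2, ?_⟩
    intro hmem
    rcases Finset.mem_insert.mp hmem with rfl | hmem
    · have : x ∈ K \ C := by rw [he]; exact Finset.mem_singleton_self x
      exact (Finset.mem_sdiff.mp this).2 hx2.1
    · have hxe' : x = e' := Finset.mem_singleton.mp hmem
      subst hxe'
      have : x ∈ K \ C' := by rw [he']; exact Finset.mem_singleton_self x
      exact (Finset.mem_sdiff.mp this).2 hx2.2
  have hKee : (K \ {e, e'}).card = d - 3 := by
    have h1 : ({e, e'} : Finset ℕ) ⊆ K := by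
      intro x hx
      rcases Finset.mem_insert.mp hx with rfl | hx
      · have : x ∈ K \ C := by rw [he]; exact Finset.mem_singleton_self x
        exact (Finset.mem_sdiff.mp this).1
      · rw [Finset.mem_singleton.mp hx]
        have : e' ∈ K \ C' := by rw [he']; exact Finset.mem_singleton_self e'
        exact (Finset.mem_sdiff.mp this).1
    rw [Finset.card_sdiff_of_subset h1, Finset.card_insert_of_notMem (by simp [hee']),
      Finset.card_singleton]
    omega
  have hupper : ((C ∩ C') ∩ K).card ≤ d - 3 := le_trans (Finset.card_le_card hsub) (le_of_eq hKee)
  have hsplit : ((C ∩ C') ∩ K).card + ((C ∩ C') \ K).card = (C ∩ C').card :=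
    Finset.card_inter_add_card_sdiff _ _
  have hEq : (C ∩ C') \ K = (C \ K) ∩ (C' \ K) := by
    ext x
    simp only [Finset.mem_sdiff, Finset.mem_inter]
    tauto
  have hlow : 2 ≤ ((C \ K) ∩ (C' \ K)).card := by
    rw [← hEq]; omega
  refine ⟨hlow, fun hne => ?_⟩
  by_contra hcon
  have h3 : 3 ≤ ((C \ K) ∩ (C' \ K)).card := by omega
  have h4 : ((C \ K) ∩ (C' \ K)) = C \ K := by
    apply Finset.eq_of_subset_of_card_le Finset.inter_subset_left
    omega
  have h5 : C \ K ⊆ C' \ K := by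
    rw [← h4]; exact Finset.inter_subset_right
  exact hne (Finset.eq_of_subset_of_card_le h5 (by omega))

/-- Every member containing K meets the core of any cross pair of special members. -/
lemma type1_meets_core {n d : ℕ} {F : Finset (Finset ℕ)} (hd : 3 ≤ d)
    (hFam : FamilyOn n (d+1) F) (hInt : DWise d F) (hNT : NonTrivialFam F)
    {K : Finset ℕ} (hKcard : K.card = d-1)
    (hpop : 6 < (F.filter (fun C => K ⊆ C)).card)
    {C C' : Finset ℕ} (hC : C ∈ F) (hC' : C' ∈ F)
    (hnsub : ¬ K ⊆ C) (hnsub' : ¬ K ⊆ C') (hdm : K \ C ≠ K \ C')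
    {M : Finset ℕ} (hM : M ∈ F) :
    (M ∩ ((C \ K) ∩ (C' \ K))).Nonempty := by
  classical
  obtain ⟨eC, heC⟩ := Finset.card_eq_one.mp
    (type2_cards hd hFam hInt hNT hKcard hpop hC hnsub).2.1
  obtain ⟨eC', heC'⟩ := Finset.card_eq_one.mp
    (type2_cards hd hFam hInt hNT hKcard hpop hC' hnsub').2.1
  have hee : eC ≠ eC' := by
    intro h; apply hdm; rw [heC, heC', h]
  have heCK : eC ∈ K := by
    have : eC ∈ K \ C := by rw [heC]; exact Finset.mem_singleton_self _
    exact (Finset.mem_sdiff.mp this).1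
  have heCK' : eC' ∈ K := by
    have : eC' ∈ K \ C' := by rw [heC']; exact Finset.mem_singleton_self _
    exact (Finset.mem_sdiff.mp this).1
  have hsel : ∀ e, ∃ D, e ∈ K → (D ∈ F ∧ ¬ K ⊆ D ∧ K \ D = {e}) := by
    intro e
    by_cases he : e ∈ K
    · obtain ⟨D, hD1, hD2, hD3⟩ := miss_exists hd hFam hInt hNT hKcard hpop he
      exact ⟨D, fun _ => ⟨hD1, hD2, hD3⟩⟩
    · exact ⟨∅, fun h => absurd h he⟩
  choose g₀ hg₀ using hsel
  set g : ℕ → Finset ℕ := fun e => if e = eC then C else if e = eC' then C' else g₀ e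
    with hgdef
  have hgeval : ∀ e, g e = if e = eC then C else if e = eC' then C' else g₀ e :=
    fun e => rfl
  have hgF : ∀ e ∈ K, g e ∈ F := by
    intro e he
    rw [hgeval]
    by_cases h1 : e = eC
    · rw [if_pos h1]; exact hC
    · by_cases h2 : e = eC'
      · rw [if_neg h1, if_pos h2]; exact hC'
      · rw [if_neg h1, if_neg h2]; exact (hg₀ e he).1
  have hgmiss : ∀ e ∈ K, K \ g e = {e} := by
    intro e he
    rw [hgeval]
    by_cases h1 : e = eC
    · rw [if_pos h1, heC, h1]
    · by_cases h2 : e = eC'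
      · rw [if_neg h1, if_pos h2, heC', h2]
      · rw [if_neg h1, if_neg h2]; exact (hg₀ e he).2.2
  set S : Finset (Finset ℕ) := (K.image g) ∪ {M} with hSdef
  have hSF : S ⊆ F := by
    intro A hA
    rcases Finset.mem_union.mp hA with h | h
    · obtain ⟨e, he, rfl⟩ := Finset.mem_image.mp h
      exact hgF e he
    · rw [Finset.mem_singleton.mp h]; exact hM
  have hScard : S.card ≤ d := by
    calc S.card ≤ (K.image g).card + 1 := by
          rw [hSdef]
          exact le_trans (Finset.card_union_le _ _) (by simp)
    _ ≤ K.card + 1 := by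
          have := Finset.card_image_le (s := K) (f := g)
          omega
    _ = d := by omega
  obtain ⟨x, hx⟩ := dwise_inter hInt hSF (by
    refine Finset.Nonempty.mono ?_ (Finset.singleton_nonempty M)
    intro A hA
    exact Finset.mem_union_right _ hA) hScard
  have hxM : x ∈ M := hx M (Finset.mem_union_right _ (Finset.mem_singleton_self M))
  have hxK : x ∉ K := by
    intro hxK
    have h1 : x ∈ g x := hx (g x) (Finset.mem_union_left _ (Finset.mem_image_of_mem g hxK))
    have h2 : x ∈ K \ g x := by
      rw [hgmiss x hxK]; exact Finset.mem_singleton_self x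
    exact (Finset.mem_sdiff.mp h2).2 h1
  have hxC : x ∈ C := by
    have hgc : g eC = C := by rw [hgeval, if_pos rfl]
    have h1 := hx (g eC) (Finset.mem_union_left _ (Finset.mem_image_of_mem g heCK))
    rwa [hgc] at h1
  have hxC' : x ∈ C' := by
    have hgc : g eC' = C' := by
      rw [hgeval, if_neg (fun h => hee h.symm), if_pos rfl]
    have h1 := hx (g eC') (Finset.mem_union_left _ (Finset.mem_image_of_mem g heCK'))
    rwa [hgc] at h1
  exact ⟨x, Finset.mem_inter.mpr ⟨hxM, Finset.mem_inter.mpr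
    ⟨Finset.mem_sdiff.mpr ⟨hxC, hxK⟩, Finset.mem_sdiff.mpr ⟨hxC', hxK⟩⟩⟩⟩

lemma eq_pair_of_two_mem {L : Finset ℕ} {a b : ℕ} (hL : L.card = 2)
    (ha : a ∈ L) (hb : b ∈ L) (hab : a ≠ b) : L = {a, b} := by
  have hsub : ({a, b} : Finset ℕ) ⊆ L := by
    intro x hx
    rcases Finset.mem_insert.mp hx with rfl | hx
    · exact ha
    · rw [Finset.mem_singleton.mp hx]; exact hb
  have hcard : L.card ≤ ({a, b} : Finset ℕ).card := by
    rw [hL, Finset.card_insert_of_notMem (by simp [hab]), Finset.card_singleton]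
  exact (Finset.eq_of_subset_of_card_le hsub hcard).symm

lemma pair_other {L : Finset ℕ} {q : ℕ} (hL : L.card = 2) (hq : q ∈ L) :
    ∃ p, p ≠ q ∧ L = {p, q} := by
  have h1 : (L.erase q).card = 1 := by
    rw [Finset.card_erase_of_mem hq, hL]
  obtain ⟨p, hp⟩ := Finset.card_eq_one.mp h1
  have hpq : p ≠ q := by
    have : p ∈ L.erase q := by rw [hp]; exact Finset.mem_singleton_self p
    exact Finset.ne_of_mem_erase this
  refine ⟨p, hpq, ?_⟩
  have hpL : p ∈ L := by
    have : p ∈ L.erase q := by rw [hp]; exact Finset.mem_singleton_self p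
    exact Finset.mem_of_mem_erase this
  rw [eq_pair_of_two_mem hL hpL hq hpq]

/-- Killing lemma: if all ≥7 edge members must meet three restrictive cores,
contradiction. -/
lemma edge_kill {n d : ℕ} {F : Finset (Finset ℕ)} (hd : 3 ≤ d)
    (hFam : FamilyOn n (d+1) F)
    {K : Finset ℕ} (hKcard : K.card = d-1)
    (hpop : 6 < (F.filter (fun C => K ⊆ C)).card)
    {q p x₂ a b : ℕ} (hqK : q ∉ K) (hpK : p ∉ K) (hx₂K : x₂ ∉ K)
    (haK : a ∉ K) (hbK : b ∉ K)
    (hpq : p ≠ q) (hx₂q : x₂ ≠ q) (hpx : p ≠ x₂) (hqa : q ≠ a) (hqb : q ≠ b)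
    (h₁ : ∀ M ∈ F, (M ∩ ({q, p} : Finset ℕ)).Nonempty)
    (h₂ : ∀ M ∈ F, (M ∩ ({q, x₂} : Finset ℕ)).Nonempty)
    (h₃ : ∀ M ∈ F, (M ∩ ({a, b} : Finset ℕ)).Nonempty) :
    False := by
  classical
  set E := F.filter (fun C => K ⊆ C) with hEdef
  have hclass : ∀ M ∈ E, M \ K ∈ ({({p, x₂} : Finset ℕ), {q, a}, {q, b}} :
      Finset (Finset ℕ)) := by
    intro M hM
    have hMF : M ∈ F := (Finset.mem_filter.mp hM).1
    have hKM : K ⊆ M := (Finset.mem_filter.mp hM).2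
    have hP2 : (M \ K).card = 2 := by
      rw [Finset.card_sdiff_of_subset hKM, (hFam M hMF).2, hKcard]
      omega
    -- membership transfer: for x ∉ K, x ∈ M ↔ x ∈ M \ K
    have htr : ∀ x, x ∉ K → (x ∈ M ↔ x ∈ M \ K) := by
      intro x hx
      constructor
      · intro h; exact Finset.mem_sdiff.mpr ⟨h, hx⟩
      · intro h; exact (Finset.mem_sdiff.mp h).1
    by_cases hq : q ∈ M
    · -- M \ K = {q, u} with u ∈ {a,b}
      have hqP : q ∈ M \ K := (htr q hqK).mp hq
      obtain ⟨u, hu, huP⟩ := pair_other hP2 hqP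
      obtain ⟨y, hy⟩ := h₃ M hMF
      have hy1 := Finset.mem_inter.mp hy
      have hyK : y ∉ K := by
        rcases Finset.mem_insert.mp hy1.2 with rfl | h
        · exact haK
        · rw [Finset.mem_singleton.mp h]; exact hbK
      have hyP : y ∈ M \ K := (htr y hyK).mp hy1.1
      have hyu : y = u := by
        rw [huP] at hyP
        rcases Finset.mem_insert.mp hyP with h' | h'
        · exact h'
        · exfalso
          have hyq : y = q := Finset.mem_singleton.mp h'
          rcases Finset.mem_insert.mp hy1.2 with h2 | h2
          · exact hqa (by rw [← hyq]; exact h2)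
          · exact hqb (by rw [← hyq]; exact Finset.mem_singleton.mp h2)
      rcases Finset.mem_insert.mp hy1.2 with h2 | h2
      · have hua : u = a := by rw [← hyu]; exact h2
        have heq : M \ K = ({q, a} : Finset ℕ) := by
          rw [huP, hua]
          ext z; simp [Finset.mem_insert]; tauto
        rw [heq]; simp
      · have hub : u = b := by rw [← hyu]; exact Finset.mem_singleton.mp h2
        have heq : M \ K = ({q, b} : Finset ℕ) := by
          rw [huP, hub]
          ext z; simp [Finset.mem_insert]; tauto
        rw [heq]; simp
    · -- q ∉ M : then p ∈ M and x₂ ∈ M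
      obtain ⟨y, hy⟩ := h₁ M hMF
      have hy1 := Finset.mem_inter.mp hy
      have hyp : y = p := by
        rcases Finset.mem_insert.mp hy1.2 with rfl | h
        · exact absurd hy1.1 hq
        · exact Finset.mem_singleton.mp h
      obtain ⟨z, hz⟩ := h₂ M hMF
      have hz1 := Finset.mem_inter.mp hz
      have hzx : z = x₂ := by
        rcases Finset.mem_insert.mp hz1.2 with rfl | h
        · exact absurd hz1.1 hq
        · exact Finset.mem_singleton.mp h
      have hpM : p ∈ M \ K := (htr p hpK).mp (hyp ▸ hy1.1)
      have hxM : x₂ ∈ M \ K := (htr x₂ hx₂K).mp (hzx ▸ hz1.1)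
      have : M \ K = {p, x₂} := eq_pair_of_two_mem hP2 hpM hxM hpx
      rw [this]
      exact Finset.mem_insert_self _ _
  -- injectivity of M ↦ M \ K on E
  have hinj : Set.InjOn (fun M => M \ K) E := by
    intro M hM M' hM' h
    have h1 := (Finset.mem_filter.mp hM).2
    have h2 := (Finset.mem_filter.mp hM').2
    have h' : M \ K = M' \ K := h
    have : K ∪ (M \ K) = K ∪ (M' \ K) := by rw [h']
    rwa [Finset.union_sdiff_of_subset h1, Finset.union_sdiff_of_subset h2] at this
  have hle : E.card ≤ 3 := by
    calc E.card = (E.image (fun M => M \ K)).card := (Finset.card_image_of_injOn hinj).symm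
    _ ≤ ({({p, x₂} : Finset ℕ), {q, a}, {q, b}} : Finset (Finset ℕ)).card := by
        apply Finset.card_le_card
        intro P hP
        obtain ⟨M, hM, rfl⟩ := Finset.mem_image.mp hP
        exact hclass M hM
    _ ≤ 3 := by
        apply le_trans (Finset.card_insert_le _ _)
        apply Nat.succ_le_succ
        apply le_trans (Finset.card_insert_le _ _)
        simp
  omega

lemma third_elt {T : Finset ℕ} {a b : ℕ} (hT : T.card = 3) (ha : a ∈ T) (hb : b ∈ T)
    (hab : a ≠ b) : ∃ s, s ∈ T ∧ s ≠ a ∧ s ≠ b ∧ T = {a, b, s} := by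
  classical
  have h1 : ((T.erase a).erase b).card = 1 := by
    rw [Finset.card_erase_of_mem (Finset.mem_erase.mpr ⟨Ne.symm hab, hb⟩),
      Finset.card_erase_of_mem ha, hT]
  obtain ⟨s, hs⟩ := Finset.card_eq_one.mp h1
  have hsmem : s ∈ (T.erase a).erase b := by rw [hs]; exact Finset.mem_singleton_self s
  have hsT : s ∈ T := Finset.mem_of_mem_erase (Finset.mem_of_mem_erase hsmem)
  have hsb : s ≠ b := Finset.ne_of_mem_erase hsmem
  have hsa : s ≠ a := Finset.ne_of_mem_erase (Finset.mem_of_mem_erase hsmem)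
  refine ⟨s, hsT, hsa, hsb, ?_⟩
  have hsub : ({a, b, s} : Finset ℕ) ⊆ T := by
    intro x hx
    rcases Finset.mem_insert.mp hx with rfl | hx
    · exact ha
    · rcases Finset.mem_insert.mp hx with rfl | hx
      · exact hb
      · rw [Finset.mem_singleton.mp hx]; exact hsT
  have hcard : T.card ≤ ({a, b, s} : Finset ℕ).card := by
    rw [hT]
    rw [Finset.card_insert_of_notMem (by simp [hab, Ne.symm hsa]),
      Finset.card_insert_of_notMem (by simp [Ne.symm hsb]), Finset.card_singleton]
  exact (Finset.eq_of_subset_of_card_le hsub hcard).symm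

lemma card_inter_kernel {d : ℕ} (hd : 3 ≤ d) {K M : Finset ℕ} {eM e u : ℕ}
    (hKcard : K.card = d-1) (hKM : K \ M = {eM}) (huK : u ∉ K) (huM : u ∈ M)
    (heK : e ∈ K) (hne : eM ≠ e) :
    (M ∩ insert u (K.erase e)).card = d-2 := by
  classical
  have heMK : eM ∈ K := by
    have : eM ∈ K \ M := by rw [hKM]; exact Finset.mem_singleton_self _
    exact (Finset.mem_sdiff.mp this).1
  have heMM : eM ∉ M := by
    have : eM ∈ K \ M := by rw [hKM]; exact Finset.mem_singleton_self _
    exact (Finset.mem_sdiff.mp this).2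
  have heq : M ∩ insert u (K.erase e) = insert u ((K.erase e).erase eM) := by
    ext z
    simp only [Finset.mem_inter, Finset.mem_insert, Finset.mem_erase]
    constructor
    · rintro ⟨hzM, rfl | ⟨hze, hzK⟩⟩
      · exact Or.inl rfl
      · refine Or.inr ⟨?_, hze, hzK⟩
        intro h
        rw [h] at hzM
        exact heMM hzM
    · rintro (rfl | ⟨hzeM, hze, hzK⟩)
      · exact ⟨huM, Or.inl rfl⟩
      · refine ⟨?_, Or.inr ⟨hze, hzK⟩⟩
        by_contra hzM
        have : z ∈ K \ M := Finset.mem_sdiff.mpr ⟨hzK, hzM⟩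
        rw [hKM] at this
        exact hzeM (Finset.mem_singleton.mp this)
  rw [heq]
  rw [Finset.card_insert_of_notMem (by
    intro h
    exact huK (Finset.mem_of_mem_erase (Finset.mem_of_mem_erase h)))]
  rw [Finset.card_erase_of_mem (Finset.mem_erase.mpr ⟨hne, heMK⟩),
    Finset.card_erase_of_mem heK, hKcard]
  omega

lemma mem_of_K_not_miss {K M : Finset ℕ} {eM z : ℕ} (hKM : K \ M = {eM})
    (hzK : z ∈ K) (hne : z ≠ eM) : z ∈ M := by
  by_contra h
  have : z ∈ K \ M := Finset.mem_sdiff.mpr ⟨hzK, h⟩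
  rw [hKM] at this
  exact hne (Finset.mem_singleton.mp this)

lemma rogue_case {n d : ℕ} {F : Finset (Finset ℕ)} (hd : 3 ≤ d)
    (hFam : FamilyOn n (d+1) F) (hInt : DWise d F) (hNT : NonTrivialFam F)
    {K : Finset ℕ} (hKn : K ⊆ Finset.Icc 1 n) (hKcard : K.card = d-1)
    (hpop : 6 < (F.filter (fun C => K ⊆ C)).card)
    {C C' R : Finset ℕ} (hCF : C ∈ F) (hC'F : C' ∈ F) (hRF : R ∈ F)
    (hCn : ¬ K ⊆ C) (hC'n : ¬ K ⊆ C') (hRn : ¬ K ⊆ R)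
    (hdm : K \ C ≠ K \ C') (hdt : C \ K ≠ C' \ K)
    (hRL : ¬ ((C \ K) ∩ (C' \ K)) ⊆ R) :
    ∃ K' L : Finset ℕ, K' ⊆ Finset.Icc 1 n ∧ L ⊆ Finset.Icc 1 n ∧
      Disjoint K' L ∧ K'.card = d-1 ∧ (L.card = 2 ∨ L.card = 3) ∧
      ∀ M ∈ F, ShapeForm d K' L M := by
  classical
  set L₀ := (C \ K) ∩ (C' \ K) with hL₀def
  have hL2 : L₀.card = 2 :=
    (cross_core hd hFam hInt hNT hKcard hpop hCF hC'F hCn hC'n hdm).2 hdt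
  -- get q ∈ R ∩ L₀
  obtain ⟨q, hq⟩ := type1_meets_core hd hFam hInt hNT hKcard hpop hCF hC'F
    hCn hC'n hdm hRF
  have hqR : q ∈ R := (Finset.mem_inter.mp hq).1
  have hqL : q ∈ L₀ := (Finset.mem_inter.mp hq).2
  obtain ⟨p, hpq, hL₀eq⟩ := pair_other hL2 hqL
  have hpL : p ∈ L₀ := by rw [hL₀eq]; exact Finset.mem_insert_self _ _
  have hpR : p ∉ R := by
    intro hpR
    apply hRL
    intro z hz
    rw [hL₀eq] at hz
    rcases Finset.mem_insert.mp hz with rfl | hz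
    · exact hpR
    · rw [Finset.mem_singleton.mp hz]; exact hqR
  have hqK : q ∉ K := (Finset.mem_sdiff.mp (Finset.mem_inter.mp hqL).1).2
  have hpK : p ∉ K := (Finset.mem_sdiff.mp (Finset.mem_inter.mp hpL).1).2
  have hqC : q ∈ C := (Finset.mem_sdiff.mp (Finset.mem_inter.mp hqL).1).1
  have hqC' : q ∈ C' := (Finset.mem_sdiff.mp (Finset.mem_inter.mp hqL).2).1
  have hpC : p ∈ C := (Finset.mem_sdiff.mp (Finset.mem_inter.mp hpL).1).1
  have hpC' : p ∈ C' := (Finset.mem_sdiff.mp (Finset.mem_inter.mp hpL).2).1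
  -- choose D among C, C' with a miss different from R's miss
  obtain ⟨D, hDF, hDn, hDm, hpD, hqD⟩ :
      ∃ D, D ∈ F ∧ ¬ K ⊆ D ∧ K \ R ≠ K \ D ∧ p ∈ D ∧ q ∈ D := by
    by_cases h : K \ R = K \ C'
    · refine ⟨C, hCF, hCn, ?_, hpC, hqC⟩
      rw [h]
      exact fun h2 => hdm h2.symm
    · exact ⟨C', hC'F, hC'n, h, hpC', hqC'⟩
  set W₂ := (R \ K) ∩ (D \ K) with hW₂def
  have hW₂2 : W₂.card = 2 := by
    apply (cross_core hd hFam hInt hNT hKcard hpop hRF hDF hRn hDn hDm).2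
    intro h
    apply hpR
    have : p ∈ D \ K := Finset.mem_sdiff.mpr ⟨hpD, hpK⟩
    rw [← h] at this
    exact (Finset.mem_sdiff.mp this).1
  have hqW₂ : q ∈ W₂ := Finset.mem_inter.mpr
    ⟨Finset.mem_sdiff.mpr ⟨hqR, hqK⟩, Finset.mem_sdiff.mpr ⟨hqD, hqK⟩⟩
  obtain ⟨x₂, hx₂q, hW₂eq⟩ := pair_other hW₂2 hqW₂
  have hx₂W : x₂ ∈ W₂ := by rw [hW₂eq]; exact Finset.mem_insert_self _ _
  have hx₂R : x₂ ∈ R := (Finset.mem_sdiff.mp (Finset.mem_inter.mp hx₂W).1).1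
  have hx₂K : x₂ ∉ K := (Finset.mem_sdiff.mp (Finset.mem_inter.mp hx₂W).1).2
  have hpx₂ : p ≠ x₂ := fun h => hpR (h ▸ hx₂R)
  -- the two core-meeting facts
  have hW₁meets : ∀ M ∈ F, (M ∩ ({p, q} : Finset ℕ)).Nonempty := by
    intro M hM
    have := type1_meets_core hd hFam hInt hNT hKcard hpop hCF hC'F hCn hC'n hdm hM
    rwa [← hL₀def, hL₀eq] at this
  have hW₂meets : ∀ M ∈ F, (M ∩ ({x₂, q} : Finset ℕ)).Nonempty := by
    intro M hM
    have := type1_meets_core hd hFam hInt hNT hKcard hpop hRF hDF hRn hDn hDm hM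
    rwa [← hW₂def, hW₂eq] at this
  -- all special members contain q
  have hqall : ∀ M ∈ F, ¬ K ⊆ M → q ∈ M := by
    by_contra hcon
    push_neg at hcon
    obtain ⟨Ds, hDsF, hDsn, hqDs⟩ := hcon
    have tDs := type2_cards hd hFam hInt hNT hKcard hpop hDsF hDsn
    have hpDs : p ∈ Ds := by
      obtain ⟨y, hy⟩ := hW₁meets Ds hDsF
      have hy1 := Finset.mem_inter.mp hy
      rcases Finset.mem_insert.mp hy1.2 with rfl | h
      · exact hy1.1
      · exact absurd ((Finset.mem_singleton.mp h) ▸ hy1.1) hqDs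
    have hx₂Ds : x₂ ∈ Ds := by
      obtain ⟨y, hy⟩ := hW₂meets Ds hDsF
      have hy1 := Finset.mem_inter.mp hy
      rcases Finset.mem_insert.mp hy1.2 with rfl | h
      · exact hy1.1
      · exact absurd ((Finset.mem_singleton.mp h) ▸ hy1.1) hqDs
    obtain ⟨c, hcT, hcp, hcx₂, hTreq⟩ := third_elt tDs.2.2
      (Finset.mem_sdiff.mpr ⟨hpDs, hpK⟩) (Finset.mem_sdiff.mpr ⟨hx₂Ds, hx₂K⟩) hpx₂
    have hcDs : c ∈ Ds := (Finset.mem_sdiff.mp hcT).1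
    have hcK : c ∉ K := (Finset.mem_sdiff.mp hcT).2
    have hcq : c ≠ q := fun h => hqDs (h ▸ hcDs)
    -- pick W ∈ {C, C'} with different miss from Ds
    obtain ⟨W, hWF, hWn, hWm, hpW, hqW⟩ :
        ∃ W, W ∈ F ∧ ¬ K ⊆ W ∧ K \ W ≠ K \ Ds ∧ p ∈ W ∧ q ∈ W := by
      by_cases h : K \ C = K \ Ds
      · refine ⟨C', hC'F, hC'n, ?_, hpC', hqC'⟩
        rw [← h]
        exact fun h2 => hdm h2.symm
      · exact ⟨C, hCF, hCn, h, hpC, hqC⟩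
    have tW := type2_cards hd hFam hInt hNT hKcard hpop hWF hWn
    obtain ⟨s, hsT, hsp, hsq, hWeq⟩ := third_elt tW.2.2
      (Finset.mem_sdiff.mpr ⟨hpW, hpK⟩) (Finset.mem_sdiff.mpr ⟨hqW, hqK⟩) hpq
    have hsW : s ∈ W := (Finset.mem_sdiff.mp hsT).1
    have hsK : s ∉ K := (Finset.mem_sdiff.mp hsT).2
    -- the core of (W, Ds) is {p, s}
    have hcore := cross_core hd hFam hInt hNT hKcard hpop hWF hDsF hWn hDsn hWm
    have hWDs : ((W \ K) ∩ (Ds \ K)).card = 2 := by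
      apply hcore.2
      intro h
      apply hqDs
      have : q ∈ Ds \ K := by
        rw [← h]; exact Finset.mem_sdiff.mpr ⟨hqW, hqK⟩
      exact (Finset.mem_sdiff.mp this).1
    have hsub : (W \ K) ∩ (Ds \ K) ⊆ {p, s} := by
      intro z hz
      have hz1 := Finset.mem_inter.mp hz
      have hzW : z ∈ W \ K := hz1.1
      rw [hWeq] at hzW
      rcases Finset.mem_insert.mp hzW with rfl | hzW
      · exact Finset.mem_insert_self _ _
      · rcases Finset.mem_insert.mp hzW with rfl | hzW
        · exfalso
          exact hqDs (Finset.mem_sdiff.mp hz1.2).1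
        · rw [Finset.mem_singleton.mp hzW]
          exact Finset.mem_insert_of_mem (Finset.mem_singleton_self _)
    have hps : p ≠ s := fun h => hsp h.symm
    have hWDseq : (W \ K) ∩ (Ds \ K) = {p, s} := by
      apply Finset.eq_of_subset_of_card_le hsub
      rw [hWDs]
      rw [Finset.card_insert_of_notMem (by simp [hps]), Finset.card_singleton]
    -- s ∈ Ds \ K so s ∈ {p, x₂, c}, and s ≠ p
    have hsDs : s ∈ Ds \ K := by
      have : s ∈ (W \ K) ∩ (Ds \ K) := by
        rw [hWDseq]
        exact Finset.mem_insert_of_mem (Finset.mem_singleton_self _)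
      exact (Finset.mem_inter.mp this).2
    have hsmem : s = x₂ ∨ s = c := by
      rw [hTreq] at hsDs
      rcases Finset.mem_insert.mp hsDs with rfl | h
      · exact absurd rfl hps.symm
      · rcases Finset.mem_insert.mp h with rfl | h
        · exact Or.inl rfl
        · exact Or.inr (Finset.mem_singleton.mp h)
    -- apply the kill lemma with cores {q,p}, {q,x₂}, {p,s}
    have hqs : q ≠ s := by
      rcases hsmem with rfl | rfl
      · exact (Ne.symm hx₂q)
      · exact (Ne.symm hcq)
    apply edge_kill hd hFam hKcard hpop hqK hpK hx₂K hpK hsK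
      hpq (Ne.symm hx₂q).symm hpx₂ (Ne.symm hpq) hqs
      (fun M hM => by
        have := hW₁meets M hM
        rwa [show ({p, q} : Finset ℕ) = {q, p} from Finset.pair_comm p q] at this)
      (fun M hM => by
        have := hW₂meets M hM
        rwa [show ({x₂, q} : Finset ℕ) = {q, x₂} from Finset.pair_comm x₂ q] at this)
      (fun M hM => by
        have := type1_meets_core hd hFam hInt hNT hKcard hpop hWF hDsF hWn hDsn hWm hM
        rwa [hWDseq] at this)
  -- a member missing q exists; it must be the edge K ∪ {p, x₂}
  have hM₀ex : ∃ M₀ ∈ F, q ∉ M₀ := by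
    by_contra h
    push_neg at h
    exact hNT ⟨q, h⟩
  obtain ⟨M₀, hM₀F, hqM₀⟩ := hM₀ex
  have hKM₀ : K ⊆ M₀ := by
    by_contra h
    exact hqM₀ (hqall M₀ hM₀F h)
  have hpM₀ : p ∈ M₀ := by
    obtain ⟨y, hy⟩ := hW₁meets M₀ hM₀F
    have hy1 := Finset.mem_inter.mp hy
    rcases Finset.mem_insert.mp hy1.2 with rfl | h
    · exact hy1.1
    · exact absurd ((Finset.mem_singleton.mp h) ▸ hy1.1) hqM₀
  have hx₂M₀ : x₂ ∈ M₀ := by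
    obtain ⟨y, hy⟩ := hW₂meets M₀ hM₀F
    have hy1 := Finset.mem_inter.mp hy
    rcases Finset.mem_insert.mp hy1.2 with rfl | h
    · exact hy1.1
    · exact absurd ((Finset.mem_singleton.mp h) ▸ hy1.1) hqM₀
  have hM₀eq : K ∪ {p, x₂} = M₀ := by
    apply Finset.eq_of_subset_of_card_le
    · apply Finset.union_subset hKM₀
      intro z hz
      rcases Finset.mem_insert.mp hz with rfl | hz
      · exact hpM₀
      · rw [Finset.mem_singleton.mp hz]; exact hx₂M₀
    · rw [(hFam M₀ hM₀F).2]
      rw [Finset.card_union_of_disjoint (by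
        rw [Finset.disjoint_left]
        intro z hzK hz2
        rcases Finset.mem_insert.mp hz2 with rfl | hz2
        · exact hpK hzK
        · rw [Finset.mem_singleton.mp hz2] at hzK; exact hx₂K hzK)]
      rw [hKcard, Finset.card_insert_of_notMem (by simp [hpx₂]), Finset.card_singleton]
      omega
  have hF4 : ∀ M ∈ F, ¬ K ⊆ M → (M ∩ ({p, x₂} : Finset ℕ)).Nonempty := by
    intro M hM hMn
    have hpw := pairwise_inter hd hFam hInt hNT hM hM₀F
    have h1 : (M ∩ K).card = d-2 := (type2_cards hd hFam hInt hNT hKcard hpop hM hMn).1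
    by_contra hempty
    rw [Finset.not_nonempty_iff_eq_empty] at hempty
    have hsub : M ∩ M₀ ⊆ M ∩ K := by
      intro z hz
      have hz1 := Finset.mem_inter.mp hz
      have hz2 : z ∈ K ∪ {p, x₂} := by rw [hM₀eq]; exact hz1.2
      rcases Finset.mem_union.mp hz2 with h | h
      · exact Finset.mem_inter.mpr ⟨hz1.1, h⟩
      · exfalso
        have : z ∈ M ∩ ({p, x₂} : Finset ℕ) := Finset.mem_inter.mpr ⟨hz1.1, h⟩
        rw [hempty] at this
        exact Finset.notMem_empty z this
    have := Finset.card_le_card hsub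
    omega
  -- case split: is there an element of {p, x₂} in all special members?
  by_cases hix : ∃ x ∈ ({p, x₂} : Finset ℕ), ∀ M ∈ F, ¬ K ⊆ M → x ∈ M
  · -- H2-type dictionary
    obtain ⟨x, hxX, hxall⟩ := hix
    have hxK : x ∉ K := by
      rcases Finset.mem_insert.mp hxX with rfl | h
      · exact hpK
      · rw [Finset.mem_singleton.mp h]; exact hx₂K
    have hxq : x ≠ q := by
      rcases Finset.mem_insert.mp hxX with rfl | h
      · exact hpq
      · rw [Finset.mem_singleton.mp h]; exact hx₂q
    have hxIcc : x ∈ Finset.Icc 1 n := by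
      apply (hFam M₀ hM₀F).1
      rcases Finset.mem_insert.mp hxX with rfl | h
      · exact hpM₀
      · rw [Finset.mem_singleton.mp h]; exact hx₂M₀
    have hqIcc : q ∈ Finset.Icc 1 n := (hFam R hRF).1 hqR
    have hKne : K.Nonempty := Finset.card_pos.mp (by omega)
    obtain ⟨e₀, he₀K⟩ := hKne
    have hqe : q ≠ e₀ := fun h => hqK (h ▸ he₀K)
    have hxe : x ≠ e₀ := fun h => hxK (h ▸ he₀K)
    have hMqx : ∀ M ∈ F, (M ∩ ({q, x} : Finset ℕ)).Nonempty := by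
      intro M hM
      rcases Finset.mem_insert.mp hxX with h | h
      · rw [h]
        have := hW₁meets M hM
        rwa [Finset.pair_comm p q] at this
      · rw [Finset.mem_singleton.mp h]
        have := hW₂meets M hM
        rwa [Finset.pair_comm x₂ q] at this
    refine ⟨insert x (K.erase e₀), {q, e₀}, ?_, ?_, ?_, ?_, Or.inl ?_, ?_⟩
    · intro z hz
      rcases Finset.mem_insert.mp hz with rfl | hz
      · exact hxIcc
      · exact hKn (Finset.mem_of_mem_erase hz)
    · intro z hz
      rcases Finset.mem_insert.mp hz with rfl | hz
      · exact hqIcc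
      · rw [Finset.mem_singleton.mp hz]; exact hKn he₀K
    · rw [Finset.disjoint_right]
      intro z hz hz2
      rcases Finset.mem_insert.mp hz with rfl | hz
      · rcases Finset.mem_insert.mp hz2 with h | h
        · exact hxq h.symm
        · exact hqK (Finset.mem_of_mem_erase h)
      · rw [Finset.mem_singleton.mp hz] at hz2
        rcases Finset.mem_insert.mp hz2 with h | h
        · exact hxe h.symm
        · exact (Finset.notMem_erase e₀ K) h
    · rw [Finset.card_insert_of_notMem (fun h => hxK (Finset.mem_of_mem_erase h)),
        Finset.card_erase_of_mem he₀K, hKcard]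
      omega
    · rw [Finset.card_insert_of_notMem (by simp [hqe]), Finset.card_singleton]
    · intro M hM
      by_cases hKM : K ⊆ M
      · by_cases hxM : x ∈ M
        · left
          constructor
          · intro z hz
            rcases Finset.mem_insert.mp hz with rfl | hz
            · exact hxM
            · exact hKM (Finset.mem_of_mem_erase hz)
          · exact ⟨e₀, Finset.mem_inter.mpr ⟨hKM he₀K,
              Finset.mem_insert_of_mem (Finset.mem_singleton_self _)⟩⟩
        · right
          constructor
          · have heq2 : M ∩ insert x (K.erase e₀) = K.erase e₀ := by
              ext z
              simp only [Finset.mem_inter, Finset.mem_insert, Finset.mem_erase]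
              constructor
              · rintro ⟨hzM, rfl | h⟩
                · exact absurd hzM hxM
                · exact h
              · rintro ⟨hze, hzK⟩
                exact ⟨hKM hzK, Or.inr ⟨hze, hzK⟩⟩
            rw [heq2, Finset.card_erase_of_mem he₀K, hKcard]
            omega
          · intro z hz
            rcases Finset.mem_insert.mp hz with rfl | hz
            · obtain ⟨y, hy⟩ := hMqx M hM
              have hy1 := Finset.mem_inter.mp hy
              rcases Finset.mem_insert.mp hy1.2 with rfl | h
              · exact hy1.1
              · exact absurd ((Finset.mem_singleton.mp h) ▸ hy1.1) hxM
            · rw [Finset.mem_singleton.mp hz]; exact hKM he₀K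
      · have tM := type2_cards hd hFam hInt hNT hKcard hpop hM hKM
        obtain ⟨eM, heM⟩ := Finset.card_eq_one.mp tM.2.1
        have hqM := hqall M hM hKM
        have hxM := hxall M hM hKM
        by_cases heq : eM = e₀
        · left
          constructor
          · intro z hz
            rcases Finset.mem_insert.mp hz with rfl | hz
            · exact hxM
            · exact mem_of_K_not_miss heM (Finset.mem_of_mem_erase hz)
                (by rw [heq]; exact Finset.ne_of_mem_erase hz)
          · exact ⟨q, Finset.mem_inter.mpr ⟨hqM, Finset.mem_insert_self _ _⟩⟩
        · right
          constructor
          · exact card_inter_kernel hd hKcard heM hxK hxM he₀K heq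
          · intro z hz
            rcases Finset.mem_insert.mp hz with rfl | hz
            · exact hqM
            · rw [Finset.mem_singleton.mp hz]
              exact mem_of_K_not_miss heM he₀K (fun h => heq (h.symm))
  · -- H3-type dictionary
    push_neg at hix
    obtain ⟨D₁, hD₁F, hD₁n, hpD₁⟩ := hix p (Finset.mem_insert_self _ _)
    obtain ⟨D₂, hD₂F, hD₂n, hx₂D₂⟩ := hix x₂
      (Finset.mem_insert_of_mem (Finset.mem_singleton_self _))
    have claim1 : ∀ Da ∈ F, ¬ K ⊆ Da → p ∉ Da → ∀ Db ∈ F, ¬ K ⊆ Db → x₂ ∉ Db →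
        K \ Da = K \ Db := by
      intro Da hDaF hDan hpDa Db hDbF hDbn hxDb
      by_contra hne
      have tDa := type2_cards hd hFam hInt hNT hKcard hpop hDaF hDan
      have tDb := type2_cards hd hFam hInt hNT hKcard hpop hDbF hDbn
      have hqDa := hqall Da hDaF hDan
      have hqDb := hqall Db hDbF hDbn
      have hx₂Da : x₂ ∈ Da := by
        obtain ⟨y, hy⟩ := hF4 Da hDaF hDan
        have hy1 := Finset.mem_inter.mp hy
        rcases Finset.mem_insert.mp hy1.2 with rfl | h
        · exact absurd hy1.1 hpDa
        · exact (Finset.mem_singleton.mp h) ▸ hy1.1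
      have hpDb : p ∈ Db := by
        obtain ⟨y, hy⟩ := hF4 Db hDbF hDbn
        have hy1 := Finset.mem_inter.mp hy
        rcases Finset.mem_insert.mp hy1.2 with rfl | h
        · exact hy1.1
        · exact absurd ((Finset.mem_singleton.mp h) ▸ hy1.1) hxDb
      obtain ⟨α, hαT, hαq, hαx₂, hDaeq⟩ := third_elt tDa.2.2
        (Finset.mem_sdiff.mpr ⟨hqDa, hqK⟩) (Finset.mem_sdiff.mpr ⟨hx₂Da, hx₂K⟩)
        (Ne.symm hx₂q)
      obtain ⟨β, hβT, hβq, hβp, hDbeq⟩ := third_elt tDb.2.2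
        (Finset.mem_sdiff.mpr ⟨hqDb, hqK⟩) (Finset.mem_sdiff.mpr ⟨hpDb, hpK⟩)
        (Ne.symm hpq)
      have hαp : α ≠ p := fun h => hpDa (h ▸ (Finset.mem_sdiff.mp hαT).1)
      have hβx₂ : β ≠ x₂ := fun h => hxDb (h ▸ (Finset.mem_sdiff.mp hβT).1)
      have hcore2 := (cross_core hd hFam hInt hNT hKcard hpop hDaF hDbF hDan hDbn hne).1
      have hsubq : (Da \ K) ∩ (Db \ K) ⊆ insert q (({α} : Finset ℕ) ∩ {β}) := by
        intro z hz
        have hz1 := Finset.mem_inter.mp hz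
        have hza : z ∈ Da \ K := hz1.1
        have hzb : z ∈ Db \ K := hz1.2
        rw [hDaeq] at hza
        rw [hDbeq] at hzb
        rcases Finset.mem_insert.mp hza with rfl | hza
        · exact Finset.mem_insert_self _ _
        · rcases Finset.mem_insert.mp hza with rfl | hza
          · -- z = x₂
            exfalso
            rcases Finset.mem_insert.mp hzb with h | h
            · exact hx₂q h
            · rcases Finset.mem_insert.mp h with h | h
              · exact hpx₂ h.symm
              · exact hβx₂ ((Finset.mem_singleton.mp h).symm)
          · rw [Finset.mem_singleton.mp hza]
            rcases Finset.mem_insert.mp hzb with h | h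
            · exfalso
              rw [Finset.mem_singleton.mp hza] at h
              exact hαq h
            · rcases Finset.mem_insert.mp h with h | h
              · exfalso
                rw [Finset.mem_singleton.mp hza] at h
                exact hαp h
              · rw [Finset.mem_singleton.mp hza] at h
                apply Finset.mem_insert_of_mem
                rw [Finset.mem_inter, Finset.mem_singleton, Finset.mem_singleton]
                exact ⟨rfl, Finset.mem_singleton.mp h⟩
      have hαβ : α = β := by
        by_contra hab
        have hemp : (({α} : Finset ℕ) ∩ {β}) = ∅ :=
          Finset.singleton_inter_of_notMem (by simp [hab])
        rw [hemp] at hsubq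
        have := Finset.card_le_card hsubq
        simp at this
        omega
      -- the core is contained in {q, α}, both of which avoid M₀
      obtain ⟨y, hy⟩ := type1_meets_core hd hFam hInt hNT hKcard hpop hDaF hDbF
        hDan hDbn hne hM₀F
      have hy1 := Finset.mem_inter.mp hy
      have hy2 := hsubq hy1.2
      have hyM₀ : y ∈ K ∪ {p, x₂} := by rw [hM₀eq]; exact hy1.1
      rcases Finset.mem_insert.mp hy2 with rfl | hy2
      · exact hqM₀ hy1.1
      · rw [Finset.mem_inter, Finset.mem_singleton, Finset.mem_singleton] at hy2
        obtain ⟨hyα, _⟩ := hy2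
        have hαK : α ∉ K := (Finset.mem_sdiff.mp hαT).2
        rcases Finset.mem_union.mp hyM₀ with h | h
        · exact hαK (by rw [← hyα]; exact h)
        · rcases Finset.mem_insert.mp h with h | h
          · exact hαp (by rw [← hyα]; exact h)
          · exact hαx₂ (by rw [← hyα]; exact Finset.mem_singleton.mp h)
    obtain ⟨e₀, he₀⟩ := Finset.card_eq_one.mp
      (type2_cards hd hFam hInt hNT hKcard hpop hD₁F hD₁n).2.1
    have he₀K : e₀ ∈ K := by
      have : e₀ ∈ K \ D₁ := by rw [he₀]; exact Finset.mem_singleton_self _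
      exact (Finset.mem_sdiff.mp this).1
    have hqe : q ≠ e₀ := fun h => hqK (h ▸ he₀K)
    have hmiss_p : ∀ M ∈ F, ¬ K ⊆ M → p ∉ M → K \ M = {e₀} := by
      intro M hM hMn hpM
      have h1 := claim1 M hM hMn hpM D₂ hD₂F hD₂n hx₂D₂
      have h2 := claim1 D₁ hD₁F hD₁n hpD₁ D₂ hD₂F hD₂n hx₂D₂
      rw [h1, ← h2, he₀]
    have hmiss_x : ∀ M ∈ F, ¬ K ⊆ M → x₂ ∉ M → K \ M = {e₀} := by
      intro M hM hMn hxM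
      have h1 := claim1 D₁ hD₁F hD₁n hpD₁ M hM hMn hxM
      rw [← h1, he₀]
    have claim2 : ∀ M ∈ F, ¬ K ⊆ M → K \ M ≠ {e₀} →
        p ∈ M ∧ x₂ ∈ M ∧ q ∈ M := by
      intro M hM hMn hMe
      refine ⟨?_, ?_, hqall M hM hMn⟩
      · by_contra h
        exact hMe (hmiss_p M hM hMn h)
      · by_contra h
        exact hMe (hmiss_x M hM hMn h)
    have hpIcc : p ∈ Finset.Icc 1 n := (hFam M₀ hM₀F).1 hpM₀
    have hx₂Icc : x₂ ∈ Finset.Icc 1 n := (hFam M₀ hM₀F).1 hx₂M₀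
    have hqIcc : q ∈ Finset.Icc 1 n := (hFam R hRF).1 hqR
    have hpe : p ≠ e₀ := fun h => hpK (h ▸ he₀K)
    have hxe : x₂ ≠ e₀ := fun h => hx₂K (h ▸ he₀K)
    refine ⟨insert q (K.erase e₀), {e₀, p, x₂}, ?_, ?_, ?_, ?_, Or.inr ?_, ?_⟩
    · intro z hz
      rcases Finset.mem_insert.mp hz with rfl | hz
      · exact hqIcc
      · exact hKn (Finset.mem_of_mem_erase hz)
    · intro z hz
      rcases Finset.mem_insert.mp hz with rfl | hz
      · exact hKn he₀K
      · rcases Finset.mem_insert.mp hz with rfl | hz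
        · exact hpIcc
        · rw [Finset.mem_singleton.mp hz]; exact hx₂Icc
    · rw [Finset.disjoint_right]
      intro z hz hz2
      have hzK' : z = q ∨ (z ∈ K ∧ z ≠ e₀) := by
        rcases Finset.mem_insert.mp hz2 with rfl | h
        · exact Or.inl rfl
        · exact Or.inr ⟨Finset.mem_of_mem_erase h, Finset.ne_of_mem_erase h⟩
      rcases Finset.mem_insert.mp hz with rfl | hz
      · rcases hzK' with h | h
        · exact hqe h.symm
        · exact h.2 rfl
      · rcases Finset.mem_insert.mp hz with rfl | hz
        · rcases hzK' with h | h
          · exact hpq h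
          · exact hpK h.1
        · have hzx : z = x₂ := Finset.mem_singleton.mp hz
          rcases hzK' with h | h
          · exact hx₂q (by rw [← hzx]; exact h)
          · exact hx₂K (by rw [← hzx]; exact h.1)
    · rw [Finset.card_insert_of_notMem (fun h => hqK (Finset.mem_of_mem_erase h)),
        Finset.card_erase_of_mem he₀K, hKcard]
      omega
    · rw [Finset.card_insert_of_notMem (by
        simp only [Finset.mem_insert, Finset.mem_singleton]
        push_neg
        exact ⟨fun h => hpe h.symm, fun h => hxe h.symm⟩),
        Finset.card_insert_of_notMem (by simp [hpx₂]), Finset.card_singleton]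
    · intro M hM
      by_cases hKM : K ⊆ M
      · by_cases hqM : q ∈ M
        · left
          constructor
          · intro z hz
            rcases Finset.mem_insert.mp hz with rfl | hz
            · exact hqM
            · exact hKM (Finset.mem_of_mem_erase hz)
          · exact ⟨e₀, Finset.mem_inter.mpr ⟨hKM he₀K, Finset.mem_insert_self _ _⟩⟩
        · right
          constructor
          · have heq2 : M ∩ insert q (K.erase e₀) = K.erase e₀ := by
              ext z
              simp only [Finset.mem_inter, Finset.mem_insert, Finset.mem_erase]
              constructor
              · rintro ⟨hzM, rfl | h⟩
                · exact absurd hzM hqM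
                · exact h
              · rintro ⟨hze, hzK⟩
                exact ⟨hKM hzK, Or.inr ⟨hze, hzK⟩⟩
            rw [heq2, Finset.card_erase_of_mem he₀K, hKcard]
            omega
          · intro z hz
            rcases Finset.mem_insert.mp hz with rfl | hz
            · exact hKM he₀K
            · rcases Finset.mem_insert.mp hz with rfl | hz
              · obtain ⟨y, hy⟩ := hW₁meets M hM
                have hy1 := Finset.mem_inter.mp hy
                rcases Finset.mem_insert.mp hy1.2 with rfl | h
                · exact hy1.1
                · exact absurd ((Finset.mem_singleton.mp h) ▸ hy1.1) hqM
              · rw [Finset.mem_singleton.mp hz]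
                obtain ⟨y, hy⟩ := hW₂meets M hM
                have hy1 := Finset.mem_inter.mp hy
                rcases Finset.mem_insert.mp hy1.2 with rfl | h
                · exact hy1.1
                · exact absurd ((Finset.mem_singleton.mp h) ▸ hy1.1) hqM
      · have tM := type2_cards hd hFam hInt hNT hKcard hpop hM hKM
        obtain ⟨eM, heM⟩ := Finset.card_eq_one.mp tM.2.1
        have hqM := hqall M hM hKM
        by_cases heq : K \ M = {e₀}
        · left
          constructor
          · intro z hz
            rcases Finset.mem_insert.mp hz with rfl | hz
            · exact hqM
            · apply mem_of_K_not_miss heq (Finset.mem_of_mem_erase hz)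
                (Finset.ne_of_mem_erase hz)
          · obtain ⟨y, hy⟩ := hF4 M hM hKM
            have hy1 := Finset.mem_inter.mp hy
            refine ⟨y, Finset.mem_inter.mpr ⟨hy1.1, ?_⟩⟩
            exact Finset.mem_insert_of_mem hy1.2
        · right
          obtain ⟨hpM, hx₂M, _⟩ := claim2 M hM hKM heq
          have heMe₀ : eM ≠ e₀ := by
            intro h
            rw [h] at heM
            exact heq heM
          constructor
          · exact card_inter_kernel hd hKcard heM hqK hqM he₀K heMe₀
          · intro z hz
            rcases Finset.mem_insert.mp hz with rfl | hz
            · exact mem_of_K_not_miss heM he₀K (fun h => heMe₀ h.symm)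
            · rcases Finset.mem_insert.mp hz with rfl | hz
              · exact hpM
              · rw [Finset.mem_singleton.mp hz]; exact hx₂M

lemma structure_exists {n d : ℕ} {F : Finset (Finset ℕ)} (hd : 3 ≤ d)
    (hn : (d+1)^2 < n)
    (hFam : FamilyOn n (d+1) F) (hInt : DWise d F) (hNT : NonTrivialFam F)
    (hMax : MaximalFam n (d+1) d F) (hCard : 3*d*(d+1) < F.card) :
    ∃ K L : Finset ℕ, K ⊆ Finset.Icc 1 n ∧ L ⊆ Finset.Icc 1 n ∧
      Disjoint K L ∧ K.card = d-1 ∧ (L.card = 2 ∨ L.card = 3) ∧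
      ∀ C ∈ F, ShapeForm d K L C := by
  classical
  obtain ⟨K, hKn, hKcard, hpop⟩ := popular_K hd hFam hInt hNT hCard
  by_cases hII : ∀ C ∈ F, ∀ C' ∈ F, ¬ K ⊆ C → ¬ K ⊆ C' → K \ C ≠ K \ C' → C \ K = C' \ K
  · -- Case II: all special triples are equal; L is the common triple
    have hC₀ : ∃ C₀ ∈ F, ¬ K ⊆ C₀ := by
      by_contra h
      push_neg at h
      have hKne : K.Nonempty := Finset.card_pos.mp (by omega)
      obtain ⟨x, hx⟩ := hKne
      exact hNT ⟨x, fun A hA => h A hA hx⟩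
    obtain ⟨C₀, hC₀F, hC₀n⟩ := hC₀
    set L := C₀ \ K with hLdef
    have t₀ := type2_cards hd hFam hInt hNT hKcard hpop hC₀F hC₀n
    obtain ⟨e₀, he₀⟩ := Finset.card_eq_one.mp t₀.2.1
    have he₀K : e₀ ∈ K := by
      have : e₀ ∈ K \ C₀ := by rw [he₀]; exact Finset.mem_singleton_self _
      exact (Finset.mem_sdiff.mp this).1
    -- all special triples equal L
    have hallL : ∀ C ∈ F, ¬ K ⊆ C → C \ K = L := by
      intro C hCF hCn
      have tC := type2_cards hd hFam hInt hNT hKcard hpop hCF hCn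
      by_cases hm : K \ C ≠ K \ C₀
      · exact hII C hCF C₀ hC₀F hCn hC₀n hm
      · push_neg at hm
        -- same miss e₀; go through a third special member with a different miss
        have he'' : ∃ e'' ∈ K, e'' ≠ e₀ := by
          have h1 : (K.erase e₀).Nonempty := by
            apply Finset.card_pos.mp
            rw [Finset.card_erase_of_mem he₀K]
            omega
          obtain ⟨e'', he''⟩ := h1
          exact ⟨e'', Finset.mem_of_mem_erase he'', Finset.ne_of_mem_erase he''⟩
        obtain ⟨e'', he''K, he''ne⟩ := he''
        obtain ⟨D, hDF, hDn, hDm⟩ := miss_exists hd hFam hInt hNT hKcard hpop he''K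
        have hmne : K \ C ≠ K \ D := by
          rw [hm, he₀, hDm]
          intro h
          exact he''ne (Finset.singleton_injective h).symm
        have hmne₀ : K \ C₀ ≠ K \ D := by
          rw [he₀, hDm]
          intro h
          exact he''ne (Finset.singleton_injective h).symm
        have h1 := hII C hCF D hDF hCn hDn hmne
        have h2 := hII C₀ hC₀F D hDF hC₀n hDn hmne₀
        rw [h1, ← h2]
    refine ⟨K, L, hKn, ?_, ?_, hKcard, Or.inr (by rw [hLdef]; omega), ?_⟩
    · rw [hLdef]
      exact fun x hx => (hFam C₀ hC₀F).1 (Finset.mem_sdiff.mp hx).1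
    · rw [hLdef, Finset.disjoint_right]
      intro x hx
      exact (Finset.mem_sdiff.mp hx).2
    · intro C hCF
      by_cases hsub : K ⊆ C
      · left
        refine ⟨hsub, ?_⟩
        -- C meets L via pairwise intersection with C₀
        have hpw := pairwise_inter hd hFam hInt hNT hCF hC₀F
        have h1 : ((C ∩ C₀) ∩ K).card ≤ d-2 := by
          calc ((C ∩ C₀) ∩ K).card ≤ (C₀ ∩ K).card := by
                apply Finset.card_le_card
                intro x hx
                have hx1 := Finset.mem_inter.mp hx
                exact Finset.mem_inter.mpr ⟨(Finset.mem_inter.mp hx1.1).2, hx1.2⟩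
          _ = d-2 := t₀.1
        have h2 : ((C ∩ C₀) ∩ K).card + ((C ∩ C₀) \ K).card = (C ∩ C₀).card :=
          Finset.card_inter_add_card_sdiff _ _
        have h3 : 1 ≤ ((C ∩ C₀) \ K).card := by omega
        obtain ⟨x, hx⟩ := Finset.card_pos.mp (by omega : 0 < ((C ∩ C₀) \ K).card)
        have hx1 := Finset.mem_sdiff.mp hx
        have hx2 := Finset.mem_inter.mp hx1.1
        exact ⟨x, Finset.mem_inter.mpr ⟨hx2.1, by
          rw [hLdef]
          exact Finset.mem_sdiff.mpr ⟨hx2.2, hx1.2⟩⟩⟩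
      · right
        have tC := type2_cards hd hFam hInt hNT hKcard hpop hCF hsub
        refine ⟨tC.1, ?_⟩
        rw [← hallL C hCF hsub]
        intro x hx
        exact (Finset.mem_sdiff.mp hx).1
  · -- Case I: there exist two special members with distinct misses and distinct triples
    push_neg at hII
    obtain ⟨C, hCF, C', hC'F, hCn, hC'n, hdm, hdt⟩ := hII
    set L := (C \ K) ∩ (C' \ K) with hLdef
    have hL2 : L.card = 2 :=
      (cross_core hd hFam hInt hNT hKcard hpop hCF hC'F hCn hC'n hdm).2 hdt
    by_cases hIA : ∀ D ∈ F, ¬ K ⊆ D → L ⊆ D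
    · -- Case I.A : all special members contain L
      refine ⟨K, L, hKn, ?_, ?_, hKcard, Or.inl hL2, ?_⟩
      · rw [hLdef]
        intro x hx
        have hx1 := Finset.mem_inter.mp hx
        exact (hFam C hCF).1 (Finset.mem_sdiff.mp hx1.1).1
      · rw [hLdef, Finset.disjoint_right]
        intro x hx
        exact (Finset.mem_sdiff.mp (Finset.mem_inter.mp hx).1).2
      · intro D hDF
        by_cases hsub : K ⊆ D
        · left
          exact ⟨hsub, type1_meets_core hd hFam hInt hNT hKcard hpop hCF hC'F
            hCn hC'n hdm hDF⟩
        · right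
          exact ⟨(type2_cards hd hFam hInt hNT hKcard hpop hDF hsub).1,
            hIA D hDF hsub⟩
    · -- Case I.B : there is a rogue special member
      push_neg at hIA
      obtain ⟨R, hRF, hRn, hRL⟩ := hIA
      exact rogue_case hd hFam hInt hNT hKn hKcard hpop hCF hC'F hRF hCn hC'n hRn
        hdm hdt hRL


theorem stmt5 (n d : ℕ) (hd : 3 ≤ d) (hn : (d+1)^2 < n)
    (F : Finset (Finset ℕ))
    (hFam : FamilyOn n (d+1) F) (hInt : DWise d F) (hNT : NonTrivialFam F)
    (hMax : MaximalFam n (d+1) d F)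
    (hCard : 3*d*(d+1) < F.card) :
    Iso n F (famH n (d+1) d 2) ∨ Iso n F (famH n (d+1) d 3) :=
  main_of_structure hd hn hFam hInt hNT hMax
    (structure_exists hd hn hFam hInt hNT hMax hCard)
end

section
/- Let k ≥ d ≥ 3. If F is a non-trivial d-wise intersecting family of k-element subsets of [n] and X is a (d-1)-element subset of [n], then the kernel degree of X in F satisfies δ_F(X) < k-d+3; that is, F contains no Δ-system of size k-d+3 with kernel X. -/
open Finset

attribute [local instance] Classical.propDecidable

theorem stmt12 (n k d : ℕ) (hd : 3 ≤ d) (hk : d ≤ k)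
    (F : Finset (Finset ℕ)) (hFam : FamilyOn n k F) (hInt : DWise d F)
    (hNT : NonTrivialFam F)
    (X : Finset ℕ) (hX : X ⊆ Finset.Icc 1 n) (hXcard : X.card = d - 1) :
    ∀ D ⊆ F, IsSunflower D X → D.card < k - d + 3 := by
  intro D hD hSun
  by_contra hcard
  push_neg at hcard
  have hG : ∀ x : ℕ, ∃ A, A ∈ F ∧ x ∉ A := by
    intro x
    by_contra h
    push_neg at h
    exact hNT ⟨x, h⟩
  choose G hGF hGx using hG
  have key : ∀ A B C : Finset ℕ, A ∈ F → B ∈ F → C ∈ F →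
      ((A ∩ X).card + 2 < d ∨ C = B) → A ∩ B ∩ C ⊆ X →
      (A ∩ X).card + 2 ≤ d → False := by
    intro A B C hA hB hC hor hsub hle
    classical
    set S := A ∩ X with hS
    let e := S.equivFin
    let f : Fin d → Finset ℕ := fun i =>
      if h : (i : ℕ) < S.card then G (e.symm ⟨(i : ℕ), h⟩).1
      else if (i : ℕ) = S.card then A
      else if (i : ℕ) = S.card + 1 then B else C
    have hfF : ∀ i, f i ∈ F := by
      intro i
      simp only [f]
      split_ifs with h1 h2 h3
      · exact hGF _
      · exact hA
      · exact hB
      · exact hC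
    obtain ⟨x, hx⟩ := hInt f hfF
    have hxA : x ∈ A := by
      have h := hx ⟨S.card, by omega⟩
      simpa [f] using h
    have hxB : x ∈ B := by
      have h := hx ⟨S.card + 1, by omega⟩
      simpa [f] using h
    have hxC : x ∈ C := by
      rcases hor with h | h
      · have h2 := hx ⟨S.card + 2, by omega⟩
        simpa [f] using h2
      · rw [h]; exact hxB
    have hxS : x ∈ S := by
      rw [hS]
      exact mem_inter.mpr ⟨hxA, hsub (by simp [mem_inter, hxA, hxB, hxC])⟩
    have hlt : ((e ⟨x, hxS⟩ : Fin S.card) : ℕ) < S.card := (e ⟨x, hxS⟩).isLt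
    have h := hx ⟨((e ⟨x, hxS⟩ : Fin S.card) : ℕ), by omega⟩
    simp only [f, hlt, dif_pos] at h
    have hval : (e.symm ⟨((e ⟨x, hxS⟩ : Fin S.card) : ℕ), hlt⟩).1 = x := by
      simp
    rw [hval] at h
    exact hGx x h
  have claim : ∀ A ∈ F, d - 2 ≤ (A ∩ X).card := by
    intro A hA
    by_contra h
    push_neg at h
    obtain ⟨B, hB, B', hB', hne⟩ : ∃ a ∈ D, ∃ b ∈ D, a ≠ b :=
      Finset.one_lt_card.mp (by omega)
    refine key A B B' hA (hD hB) (hD hB') (Or.inl (by omega)) ?_ (by omega)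
    intro y hy
    simp only [mem_inter] at hy
    have : y ∈ B ∩ B' := mem_inter.mpr ⟨hy.1.2, hy.2⟩
    rw [hSun B hB B' hB' hne] at this
    exact this
  have hXne : X.Nonempty := Finset.card_pos.mp (by omega)
  obtain ⟨x0, hx0⟩ := hXne
  set A0 := G x0 with hA0
  have hA0F : A0 ∈ F := hGF x0
  have hA0card : A0.card = k := (hFam A0 hA0F).2
  have hs_le : (A0 ∩ X).card ≤ d - 2 := by
    have hsub : A0 ∩ X ⊆ X.erase x0 := by
      intro y hy
      simp only [mem_inter] at hy
      refine Finset.mem_erase.mpr ⟨?_, hy.2⟩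
      intro hyx
      have hmem : x0 ∈ A0 := hyx ▸ hy.1
      rw [hA0] at hmem
      exact hGx x0 hmem
    calc (A0 ∩ X).card ≤ (X.erase x0).card := Finset.card_le_card hsub
      _ = d - 1 - 1 := by rw [Finset.card_erase_of_mem hx0, hXcard]
      _ ≤ d - 2 := by omega
  have hs_ge : d - 2 ≤ (A0 ∩ X).card := claim A0 hA0F
  have hsplit : (A0 ∩ X).card + (A0 \ X).card = k := by
    rw [Finset.card_inter_add_card_sdiff, hA0card]
  have hpetal : ∃ B1 ∈ D, A0 ∩ (B1 \ X) = ∅ := by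
    by_contra h
    push_neg at h
    have hne : ∀ B ∈ D, (A0 ∩ (B \ X)).Nonempty := fun B hB =>
      h B hB
    set ψ : Finset ℕ → ℕ := fun B =>
      if hB : (A0 ∩ (B \ X)).Nonempty then hB.choose else 0 with hψ
    have hψmem : ∀ B ∈ D, ψ B ∈ A0 ∩ (B \ X) := by
      intro B hB
      simp only [hψ, dif_pos (hne B hB)]
      exact (hne B hB).choose_spec
    have hmaps : ∀ B ∈ D, ψ B ∈ A0 \ X := by
      intro B hB
      have := hψmem B hB
      simp only [mem_inter, Finset.mem_sdiff] at this
      exact Finset.mem_sdiff.mpr ⟨this.1, this.2.2⟩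
    have hinj : Set.InjOn ψ D := by
      intro B hB B' hB' heq
      by_contra hne'
      have h1 := hψmem B hB
      have h2 := hψmem B' hB'
      rw [heq] at h1
      simp only [mem_inter, Finset.mem_sdiff] at h1 h2
      have : ψ B' ∈ B ∩ B' := mem_inter.mpr ⟨h1.2.1, h2.2.1⟩
      rw [hSun B hB B' hB' hne'] at this
      exact h1.2.2 this
    have := Finset.card_le_card_of_injOn ψ hmaps hinj
    omega
  obtain ⟨B1, hB1, hB1pet⟩ := hpetal
  refine key A0 B1 B1 hA0F (hD hB1) (hD hB1) (Or.inr rfl) ?_ (by omega)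
  intro y hy
  simp only [mem_inter] at hy
  by_contra hyX
  have : y ∈ A0 ∩ (B1 \ X) := mem_inter.mpr ⟨hy.1.1, Finset.mem_sdiff.mpr ⟨hy.2, hyX⟩⟩
  rw [hB1pet] at this
  exact absurd this (Finset.notMem_empty y)
end

section
/- Let k > d ≥ 3 and let F be a maximal non-trivial d-wise intersecting family of k-element subsets of [n]. If B ⊆ [n] satisfies d ≤ |B| < k and F contains a Δ-system of cardinality k^{|B|-d+1} with kernel B (that is, B ∈ B1(F)), then every k-element subset of [n] that contains B belongs to F. -/
open Finset

attribute [local instance] Classical.propDecidable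

theorem stmt13 (n k d : ℕ) (hd : 3 ≤ d) (hk : d < k)
    (F : Finset (Finset ℕ)) (hFam : FamilyOn n k F) (hInt : DWise d F)
    (hNT : NonTrivialFam F) (hMax : MaximalFam n k d F)
    (B : Finset ℕ) (hB : B ⊆ Finset.Icc 1 n)
    (hBd : d ≤ B.card) (hBk : B.card < k)
    (hSun : ∃ D ⊆ F, D.card = k ^ (B.card - d + 1) ∧ IsSunflower D B) :
    ∀ A : Finset ℕ, A ⊆ Finset.Icc 1 n → A.card = k → B ⊆ A → A ∈ F := by
  intro A hAsub hAcard hBA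
  by_contra hA
  have hnd := hMax A hAsub hAcard hA
  rw [DWise] at hnd
  push_neg at hnd
  obtain ⟨f, hf1, hf2⟩ := hnd
  have hmem : ∀ i, f i = A ∨ f i ∈ F := by
    intro i; have := hf1 i; rw [Finset.mem_insert] at this; tauto
  by_cases hall : ∀ i, f i ∈ F
  · obtain ⟨x, hx⟩ := hInt f hall
    obtain ⟨i, hi⟩ := hf2 x
    exact hi (hx i)
  push_neg at hall
  obtain ⟨iA, hiA⟩ := hall
  have hfA : f iA = A := by rcases hmem iA with h | h; exact h; exact absurd h hiA
  obtain ⟨D, hDF, hDcard, hDsun⟩ := hSun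
  by_cases hex : ∃ i₀, f i₀ ≠ A
  swap
  · push_neg at hex
    have hApos : A.Nonempty := Finset.card_pos.mp (by omega)
    obtain ⟨x, hx⟩ := hApos
    obtain ⟨i, hi⟩ := hf2 x
    rw [hex i] at hi
    exact hi hx
  obtain ⟨i₀, hi₀⟩ := hex
  have hi₀F : f i₀ ∈ F := by rcases hmem i₀ with h | h; exact absurd h hi₀; exact h
  -- For each sunflower member, a common point avoiding A
  have hpt : ∀ P ∈ D, ∃ x, x ∈ P ∧ x ∉ A ∧ x ∈ f i₀ := by
    intro P hP
    have hPF : P ∈ F := hDF hP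
    obtain ⟨x, hx⟩ := hInt (fun i => if f i = A then P else f i) (by
      intro i
      by_cases h : f i = A
      · simpa [h] using hPF
      · rcases hmem i with h' | h'
        · exact absurd h' h
        · simpa [h] using h')
    refine ⟨x, ?_, ?_, ?_⟩
    · have := hx iA; simpa [hfA] using this
    · intro hxA
      obtain ⟨i, hi⟩ := hf2 x
      apply hi
      by_cases h : f i = A
      · rw [h]; exact hxA
      · have := hx i; simpa [h] using this
    · have := hx i₀; simpa [hi₀] using this
  have hpt' : ∀ P : Finset ℕ, ∃ x, P ∈ D → x ∈ P ∧ x ∉ A ∧ x ∈ f i₀ := by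
    intro P
    by_cases hP : P ∈ D
    · obtain ⟨x, h1, h2, h3⟩ := hpt P hP
      exact ⟨x, fun _ => ⟨h1, h2, h3⟩⟩
    · exact ⟨0, fun h => absurd h hP⟩
  choose g hg using hpt'
  have hinj : Set.InjOn g ↑D := by
    intro P hP Q hQ hPQ
    by_contra hne
    have h1 := hg P hP
    have h2 := hg Q hQ
    have hgB : g P ∈ B := by
      rw [← hDsun P hP Q hQ hne]
      exact Finset.mem_inter.mpr ⟨h1.1, hPQ ▸ h2.1⟩
    exact h1.2.1 (hBA hgB)
  have hfi₀card : (f i₀).card = k := (hFam _ hi₀F).2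
  have hle : D.card ≤ k := by
    have := Finset.card_le_card_of_injOn g (fun P hP => (hg P hP).2.2) hinj
    omega
  have hkle : k ≤ D.card := by
    rw [hDcard]
    exact Nat.le_self_pow (by omega) k
  have himg : D.image g = f i₀ := by
    apply Finset.eq_of_subset_of_card_le
    · intro y hy
      obtain ⟨P, hP, rfl⟩ := Finset.mem_image.mp hy
      exact (hg P hP).2.2
    · rw [Finset.card_image_of_injOn hinj]; omega
  have hdisj : ∀ y ∈ f i₀, y ∉ A := by
    intro y hy
    rw [← himg] at hy
    obtain ⟨P, hP, rfl⟩ := Finset.mem_image.mp hy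
    exact (hg P hP).2.1
  -- pick two distinct sunflower members
  obtain ⟨D₁, hD₁, D₂, hD₂, hne⟩ := Finset.one_lt_card.mp (by omega : 1 < D.card)
  obtain ⟨y, hy⟩ := hInt
    (fun i => if (i : ℕ) = 0 then D₁ else if (i : ℕ) = 1 then D₂ else f i₀) (by
      intro i
      by_cases h0 : (i : ℕ) = 0
      · simpa [h0] using hDF hD₁
      · by_cases h1 : (i : ℕ) = 1
        · simpa [h0, h1] using hDF hD₂
        · simpa [h0, h1] using hi₀F)
  have hy1 : y ∈ D₁ := by have := hy ⟨0, by omega⟩; simpa using this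
  have hy2 : y ∈ D₂ := by have := hy ⟨1, by omega⟩; simpa using this
  have hy3 : y ∈ f i₀ := by have := hy ⟨2, by omega⟩; simpa using this
  have hyB : y ∈ B := by
    rw [← hDsun D₁ hD₁ D₂ hD₂ hne]
    exact Finset.mem_inter.mpr ⟨hy1, hy2⟩
  exact hdisj y hy3 (hBA hyB)
end

section
/- Let k > d ≥ 3. If F is a non-trivial d-wise intersecting family of k-element subsets of [n], then B(F) is a (d-1)-intersecting family; moreover, |B ∩ F| ≥ d-1 for every B ∈ B(F) and every F ∈ F. -/
open Finset

attribute [local instance] Classical.propDecidable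

lemma dwise_common {d : ℕ} {F : Finset (Finset ℕ)} (hInt : DWise d F)
    {S : Finset (Finset ℕ)} (hS : S ⊆ F) (hne : S.Nonempty) (hcard : S.card ≤ d) :
    ∃ x, ∀ B ∈ S, x ∈ B := by
  obtain ⟨A0, hA0⟩ := hne
  set l := S.toList with hl
  have hlen : l.length = S.card := Finset.length_toList S
  have hf : ∀ i : Fin d, l.getD i A0 ∈ S := by
    intro i
    by_cases h : (i : ℕ) < l.length
    · rw [List.getD_eq_getElem l A0 h]
      exact Finset.mem_toList.mp (List.getElem_mem _)
    · rw [List.getD_eq_default l A0 (le_of_not_gt h)]; exact hA0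
  obtain ⟨x, hx⟩ := hInt (fun i => l.getD i A0) (fun i => hS (hf i))
  refine ⟨x, fun B hB => ?_⟩
  obtain ⟨j, hj, hjB⟩ := List.getElem_of_mem (Finset.mem_toList.mpr hB)
  have hjl : (j : ℕ) < l.length := by rw [hl]; exact hj
  have hjd : j < d := lt_of_lt_of_le (hlen ▸ hjl) hcard
  have hxx := hx ⟨j, hjd⟩
  rw [show ((⟨j, hjd⟩ : Fin d) : ℕ) = j from rfl] at hxx
  rwa [List.getD_eq_getElem l A0 hjl, hjB] at hxx

section Main
variable {n k d : ℕ} {F : Finset (Finset ℕ)}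

/-- choice of a member of `F` avoiding a given point -/
lemma nontrivial_choice (hNT : NonTrivialFam F) :
    ∀ x : ℕ, ∃ A ∈ F, x ∉ A := by
  intro x; by_contra h; push_neg at h; exact hNT ⟨x, h⟩

/-- L0 : any two members meet in ≥ d-1 points. -/
lemma two_inter (hd : 3 ≤ d) (hInt : DWise d F) (hNT : NonTrivialFam F)
    {A B : Finset ℕ} (hA : A ∈ F) (hB : B ∈ F) : d - 1 ≤ (A ∩ B).card := by
  classical
  obtain ⟨G, hGF, hGx⟩ : ∃ G : ℕ → Finset ℕ, (∀ x, G x ∈ F) ∧ ∀ x, x ∉ G x := by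
    choose G h1 h2 using nontrivial_choice hNT; exact ⟨G, h1, h2⟩
  by_contra hc
  have hs : (A ∩ B).card + 2 ≤ d := by omega
  set S : Finset (Finset ℕ) := insert A (insert B ((A ∩ B).image G)) with hS
  have hSsub : S ⊆ F := by
    intro C hC
    simp only [hS, Finset.mem_insert, Finset.mem_image] at hC
    rcases hC with rfl | rfl | ⟨x, _, rfl⟩
    exacts [hA, hB, hGF x]
  have hScard : S.card ≤ d := by
    calc S.card ≤ (insert B ((A ∩ B).image G)).card + 1 := Finset.card_insert_le _ _
      _ ≤ ((A ∩ B).image G).card + 1 + 1 := by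
          have := Finset.card_insert_le B ((A ∩ B).image G); omega
      _ ≤ (A ∩ B).card + 2 := by have := Finset.card_image_le (s := A ∩ B) (f := G); omega
      _ ≤ d := hs
  obtain ⟨x, hx⟩ := dwise_common hInt hSsub ⟨A, by simp [hS]⟩ hScard
  have hxAB : x ∈ A ∩ B :=
    Finset.mem_inter.mpr ⟨hx A (by simp [hS]), hx B (by simp [hS])⟩
  exact hGx x (hx (G x)
    (by simp only [hS, Finset.mem_insert]
        exact Or.inr (Or.inr (Finset.mem_image_of_mem G hxAB))))

/-- L1 : a kernel meets every member in ≥ d-1 points. -/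
lemma kernel_inter (hd : 3 ≤ d) (hk : d < k) (hFam : FamilyOn n k F)
    (hInt : DWise d F) (hNT : NonTrivialFam F)
    {X : Finset ℕ} (hX : X ∈ Bone n k d F) {A : Finset ℕ} (hA : A ∈ F) :
    d - 1 ≤ (X ∩ A).card := by
  classical
  obtain ⟨G, hGF, hGx⟩ : ∃ G : ℕ → Finset ℕ, (∀ x, G x ∈ F) ∧ ∀ x, x ∉ G x := by
    choose G h1 h2 using nontrivial_choice hNT; exact ⟨G, h1, h2⟩
  rw [Bone, Finset.mem_filter] at hX
  obtain ⟨-, hdX, hXk, D, hDF, hDcard, hsun⟩ := hX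
  rw [Finset.mem_powerset] at hDF
  have hkD : k ≤ D.card := by
    rw [hDcard]; exact Nat.le_self_pow (by omega) k
  -- first: (X ∩ A) is nonempty
  have hs1 : 1 ≤ (X ∩ A).card := by
    obtain ⟨D1, hD1, D2, hD2, hne⟩ := Finset.one_lt_card.mp (by omega : 1 < D.card)
    have hsub : ({D1, D2, A} : Finset (Finset ℕ)) ⊆ F := by
      intro C hC; simp only [Finset.mem_insert, Finset.mem_singleton] at hC
      rcases hC with rfl | rfl | rfl
      exacts [hDF hD1, hDF hD2, hA]
    have hcard3 : ({D1, D2, A} : Finset (Finset ℕ)).card ≤ d := by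
      have h1 := Finset.card_insert_le D1 ({D2, A} : Finset (Finset ℕ))
      have h2 := Finset.card_insert_le D2 ({A} : Finset (Finset ℕ))
      have h3 : ({A} : Finset (Finset ℕ)).card = 1 := Finset.card_singleton A
      omega
    obtain ⟨x, hx⟩ := dwise_common hInt hsub ⟨A, by simp⟩ hcard3
    have hx1 : x ∈ D1 := hx D1 (by simp)
    have hx2 : x ∈ D2 := hx D2 (by simp)
    have hxA : x ∈ A := hx A (by simp)
    have : x ∈ X := by rw [← hsun D1 hD1 D2 hD2 hne]; exact Finset.mem_inter.mpr ⟨hx1, hx2⟩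
    exact Finset.card_pos.mpr ⟨x, Finset.mem_inter.mpr ⟨this, hxA⟩⟩
  by_contra hc
  have hs : (X ∩ A).card + 2 ≤ d := by omega
  -- find a sunflower member whose petal avoids A
  set Dbad : Finset (Finset ℕ) := D.filter (fun E => ¬ (E ∩ A ⊆ X)) with hDbad
  set w : Finset ℕ → ℕ := fun E => if h : ((E ∩ A) \ X).Nonempty then h.choose else 0 with hw
  have hwspec : ∀ E ∈ Dbad, w E ∈ (E ∩ A) \ X := by
    intro E hE
    have h : ((E ∩ A) \ X).Nonempty := by
      rcases Finset.not_subset.mp ((Finset.mem_filter.mp hE).2) with ⟨y, hy, hyX⟩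
      exact ⟨y, Finset.mem_sdiff.mpr ⟨hy, hyX⟩⟩
    simp only [hw, dif_pos h]; exact h.choose_spec
  have hbadcard : Dbad.card ≤ (A \ X).card := by
    apply Finset.card_le_card_of_injOn w
    · intro E hE
      have := hwspec E hE
      rw [Finset.mem_sdiff, Finset.mem_inter] at this
      exact Finset.mem_sdiff.mpr ⟨this.1.2, this.2⟩
    · intro E hE E' hE' heq
      by_contra hne
      have h1 := hwspec E hE
      have h2 := hwspec E' hE'
      rw [Finset.mem_sdiff, Finset.mem_inter] at h1 h2
      have hED : E ∈ D := (Finset.mem_filter.mp hE).1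
      have hED' : E' ∈ D := (Finset.mem_filter.mp hE').1
      have : w E ∈ X := by
        rw [← hsun E hED E' hED' hne]
        exact Finset.mem_inter.mpr ⟨h1.1.1, heq ▸ h2.1.1⟩
      exact h1.2 this
  have hAX : (A \ X).card + (A ∩ X).card = k := by
    rw [Finset.card_sdiff_add_card_inter]; exact (hFam A hA).2
  have hXA : (A ∩ X).card = (X ∩ A).card := by rw [Finset.inter_comm]
  obtain ⟨D1, hD1, hD1good⟩ : ∃ D1 ∈ D, D1 ∩ A ⊆ X := by
    by_contra h; push_neg at h
    have hDD : Dbad = D := by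
      rw [hDbad]
      exact Finset.filter_eq_self.mpr h
    have hcc : Dbad.card = D.card := by rw [hDD]
    omega
  -- now the d-wise contradiction
  set S : Finset (Finset ℕ) := insert D1 (insert A ((X ∩ A).image G)) with hS
  have hSsub : S ⊆ F := by
    intro C hC
    simp only [hS, Finset.mem_insert, Finset.mem_image] at hC
    rcases hC with rfl | rfl | ⟨x, _, rfl⟩
    exacts [hDF hD1, hA, hGF x]
  have hScard : S.card ≤ d := by
    calc S.card ≤ (insert A ((X ∩ A).image G)).card + 1 := Finset.card_insert_le _ _
      _ ≤ ((X ∩ A).image G).card + 1 + 1 := by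
          have := Finset.card_insert_le A ((X ∩ A).image G); omega
      _ ≤ (X ∩ A).card + 2 := by have := Finset.card_image_le (s := X ∩ A) (f := G); omega
      _ ≤ d := hs
  obtain ⟨x, hx⟩ := dwise_common hInt hSsub ⟨A, by simp [hS]⟩ hScard
  have hxXA : x ∈ X ∩ A := by
    have hxD1 : x ∈ D1 := hx D1 (by simp [hS])
    have hxA : x ∈ A := hx A (by simp [hS])
    exact Finset.mem_inter.mpr ⟨hD1good (Finset.mem_inter.mpr ⟨hxD1, hxA⟩), hxA⟩
  exact hGx x (hx (G x)
    (by simp only [hS, Finset.mem_insert]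
        exact Or.inr (Or.inr (Finset.mem_image_of_mem G hxXA))))

/-- L2 : two kernels meet in ≥ d-1 points. -/
lemma kernel_kernel (hd : 3 ≤ d) (hk : d < k) (hFam : FamilyOn n k F)
    (hInt : DWise d F) (hNT : NonTrivialFam F)
    {X Y : Finset ℕ} (hX : X ∈ Bone n k d F) (hY : Y ∈ Bone n k d F) :
    d - 1 ≤ (X ∩ Y).card := by
  classical
  by_contra hc
  have hXk : X.card < k := ((Finset.mem_filter.mp hX).2).2.1
  rw [Bone, Finset.mem_filter] at hY
  obtain ⟨-, hdY, hYk, D, hDF, hDcard, hsun⟩ := hY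
  rw [Finset.mem_powerset] at hDF
  have hkD : k ≤ D.card := by
    rw [hDcard]; exact Nat.le_self_pow (by omega) k
  set w : Finset ℕ → ℕ := fun E => if h : ((X ∩ E) \ Y).Nonempty then h.choose else 0 with hw
  have hwspec : ∀ E ∈ D, w E ∈ (X ∩ E) \ Y := by
    intro E hE
    have h : ((X ∩ E) \ Y).Nonempty := by
      by_contra hne
      rw [Finset.not_nonempty_iff_eq_empty, Finset.sdiff_eq_empty_iff_subset] at hne
      have hsubXY : X ∩ E ⊆ X ∩ Y := fun y hy =>
        Finset.mem_inter.mpr ⟨(Finset.mem_inter.mp hy).1, hne hy⟩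
      have h1 : d - 1 ≤ (X ∩ E).card :=
        kernel_inter hd hk hFam hInt hNT hX (hDF hE)
      have h2 := Finset.card_le_card hsubXY
      omega
    simp only [hw, dif_pos h]; exact h.choose_spec
  have hDcardle : D.card ≤ (X \ Y).card := by
    apply Finset.card_le_card_of_injOn w
    · intro E hE
      have := hwspec E hE
      rw [Finset.mem_sdiff, Finset.mem_inter] at this
      exact Finset.mem_sdiff.mpr ⟨this.1.1, this.2⟩
    · intro E hE E' hE' heq
      by_contra hne
      have h1 := hwspec E hE
      have h2 := hwspec E' hE'
      rw [Finset.mem_sdiff, Finset.mem_inter] at h1 h2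
      have : w E ∈ Y := by
        rw [← hsun E hE E' hE' hne]
        exact Finset.mem_inter.mpr ⟨h1.1.2, heq ▸ h2.1.2⟩
      exact h1.2 this
  have : (X \ Y).card ≤ X.card := Finset.card_le_card (Finset.sdiff_subset)
  omega


theorem stmt14 (n k d : ℕ) (hd : 3 ≤ d) (hk : d < k)
    (F : Finset (Finset ℕ)) (hFam : FamilyOn n k F) (hInt : DWise d F)
    (hNT : NonTrivialFam F) :
    TInter (d - 1) (famB n k d F) ∧
    ∀ B ∈ famB n k d F, ∀ A ∈ F, d - 1 ≤ (B ∩ A).card := by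
  have hB2 : ∀ X ∈ Btwo n k d F, X ∈ Bone n k d F := fun X hX => (Finset.mem_filter.mp hX).1
  have hB3 : ∀ A ∈ Bthree n k d F, A ∈ F := fun A hA => (Finset.mem_filter.mp hA).1
  have key : ∀ B ∈ famB n k d F, ∀ A ∈ F, d - 1 ≤ (B ∩ A).card := by
    intro B hB A hA
    rw [famB, Finset.mem_union] at hB
    rcases hB with h | h
    · exact kernel_inter hd hk hFam hInt hNT (hB2 B h) hA
    · exact two_inter hd hInt hNT (hB3 B h) hA
  refine ⟨?_, key⟩
  intro A hA B hB
  rw [famB, Finset.mem_union] at hA hB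
  rcases hA with h | h <;> rcases hB with h' | h'
  · exact kernel_kernel hd hk hFam hInt hNT (hB2 A h) (hB2 B h')
  · exact kernel_inter hd hk hFam hInt hNT (hB2 A h) (hB3 B h')
  · rw [Finset.inter_comm]
    exact kernel_inter hd hk hFam hInt hNT (hB2 B h') (hB3 A h)
  · exact two_inter hd hInt hNT (hB3 A h) (hB3 B h')
end Main
end

section
/- Let k > d ≥ 3 and let F be a non-trivial d-wise intersecting family of k-element subsets of [n]. For every i with d+1 ≤ i ≤ k, the family B^(i) = {T ∈ B(F) : |T| = i} contains no Δ-system of size k^{i-d}. -/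
open Finset

attribute [local instance] Classical.propDecidable

section proof15

variable {n k d : ℕ} {F : Finset (Finset ℕ)}

lemma kernel_subset15 {D : Finset (Finset ℕ)} {X : Finset ℕ} (hS : IsSunflower D X)
    (h2 : 2 ≤ D.card) : ∀ A ∈ D, X ⊆ A := by
  intro A hA
  obtain ⟨B, hB, hne⟩ := Finset.exists_mem_ne (s := D) (by omega) A
  rw [← hS A hA B hB (fun h => hne h.symm)]
  exact Finset.inter_subset_left

lemma small_kernel15 (hd : 3 ≤ d) (hk : d < k)
    (hFam : FamilyOn n k F) (hInt : DWise d F) (hNT : NonTrivialFam F)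
    {G : Finset (Finset ℕ)} {X : Finset ℕ} (hGF : G ⊆ F)
    (hG : IsSunflower G X) (hcard : k ≤ G.card) : d ≤ X.card := by
  by_contra hX
  push_neg at hX
  have h1G : 1 < G.card := by omega
  obtain ⟨G1, hG1⟩ := Finset.card_pos.1 (by omega : 0 < G.card)
  obtain ⟨G2, hG2, hG21⟩ := Finset.exists_mem_ne h1G G1
  have hG12 : G1 ∩ G2 = X := hG G1 hG1 G2 hG2 (fun h => hG21 h.symm)
  -- every member of F meets X
  have meets : ∀ A ∈ F, (A ∩ X).Nonempty := by
    intro A hA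
    obtain ⟨x, hx⟩ := hInt (fun j => if (j : ℕ) = 0 then A else if (j : ℕ) = 1 then G1 else G2)
      (by intro j; split_ifs; exacts [hA, hGF hG1, hGF hG2])
    have hxA : x ∈ A := by simpa using hx ⟨0, by omega⟩
    have hx1 : x ∈ G1 := by simpa using hx ⟨1, by omega⟩
    have hx2 : x ∈ G2 := by simpa using hx ⟨2, by omega⟩
    exact ⟨x, Finset.mem_inter.2 ⟨hxA, hG12 ▸ Finset.mem_inter.2 ⟨hx1, hx2⟩⟩⟩
  have excl : ∀ x : ℕ, ∃ A ∈ F, x ∉ A := by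
    intro x
    by_contra h
    push_neg at h
    exact hNT ⟨x, h⟩
  -- a finite set of excluders
  have hSbuild : ∀ Y : Finset ℕ, ∃ S : Finset (Finset ℕ),
      S ⊆ F ∧ S.card ≤ Y.card ∧ ∀ y ∈ Y, ∃ A ∈ S, y ∉ A := by
    intro Y
    induction Y using Finset.induction_on with
    | empty => exact ⟨∅, by simp, by simp, by simp⟩
    | @insert y Y hy ih =>
      obtain ⟨S, hS1, hS2, hS3⟩ := ih
      obtain ⟨A, hA, hyA⟩ := excl y
      refine ⟨insert A S, Finset.insert_subset hA hS1, ?_, ?_⟩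
      · calc (insert A S).card ≤ S.card + 1 := Finset.card_insert_le _ _
          _ ≤ Y.card + 1 := by omega
          _ = (insert y Y).card := (Finset.card_insert_of_notMem hy).symm
      · intro z hz
        rcases Finset.mem_insert.1 hz with h | h
        · exact ⟨A, Finset.mem_insert_self _ _, h ▸ hyA⟩
        · obtain ⟨B, hB, hzB⟩ := hS3 z h
          exact ⟨B, Finset.mem_insert_of_mem hB, hzB⟩
  obtain ⟨S, hSF, hScard, hSexcl⟩ := hSbuild X
  obtain ⟨x0, hx0⟩ := meets G1 (hGF hG1)
  have hx0X : x0 ∈ X := (Finset.mem_inter.1 hx0).2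
  obtain ⟨A1, hA1S, -⟩ := hSexcl x0 hx0X
  have hA1F : A1 ∈ F := hSF hA1S
  have hA1card : A1.card = k := (hFam A1 hA1F).2
  obtain ⟨a, ha⟩ := meets A1 hA1F
  have haA1 : a ∈ A1 := (Finset.mem_inter.1 ha).1
  have haX : a ∈ X := (Finset.mem_inter.1 ha).2
  have hsd : (A1 \ X).card < k := by
    have hlt : (A1 \ X).card < A1.card := by
      refine Finset.card_lt_card (Finset.ssubset_iff_subset_ne.2 ⟨Finset.sdiff_subset, ?_⟩)
      intro h
      have haa : a ∈ A1 \ X := by rw [h]; exact haA1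
      exact (Finset.mem_sdiff.1 haa).2 haX
    omega
  have hone : ∀ z, z ∉ X → (G.filter (fun g => z ∈ g)).card ≤ 1 := by
    intro z hz
    rw [Finset.card_le_one]
    intro g1 h1 g2 h2
    by_contra hne
    rw [Finset.mem_filter] at h1 h2
    exact hz (hG g1 h1.1 g2 h2.1 hne ▸ Finset.mem_inter.2 ⟨h1.2, h2.2⟩)
  set bad := G.filter (fun g => ¬ (g ∩ A1 ⊆ X)) with hbaddef
  have hbadsub : bad ⊆ (A1 \ X).biUnion (fun z => G.filter (fun g => z ∈ g)) := by
    intro g hg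
    rw [hbaddef, Finset.mem_filter] at hg
    obtain ⟨hgG, hgP⟩ := hg
    rw [Finset.not_subset] at hgP
    obtain ⟨z, hz1, hz2⟩ := hgP
    rw [Finset.mem_inter] at hz1
    exact Finset.mem_biUnion.2 ⟨z, Finset.mem_sdiff.2 ⟨hz1.2, hz2⟩,
      Finset.mem_filter.2 ⟨hgG, hz1.1⟩⟩
  have hbadcard : bad.card < G.card := by
    calc bad.card ≤ _ := Finset.card_le_card hbadsub
      _ ≤ ∑ z ∈ A1 \ X, (G.filter (fun g => z ∈ g)).card := Finset.card_biUnion_le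
      _ ≤ ∑ _z ∈ A1 \ X, 1 :=
          Finset.sum_le_sum (fun z hz => hone z (Finset.mem_sdiff.1 hz).2)
      _ = (A1 \ X).card := by simp
      _ < k := hsd
      _ ≤ G.card := hcard
  have hpos : 0 < (G \ bad).card := by
    rw [Finset.card_sdiff_of_subset (show bad ⊆ G by rw [hbaddef]; exact Finset.filter_subset _ _)]
    omega
  obtain ⟨G0, hG0⟩ := Finset.card_pos.1 hpos
  obtain ⟨hG0G, hG0nb⟩ := Finset.mem_sdiff.1 hG0
  have hG0X : G0 ∩ A1 ⊆ X := by
    by_contra h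
    exact hG0nb (Finset.mem_filter.2 ⟨hG0G, h⟩)
  -- apply d-wise intersecting to S padded with G0
  have hLlen : S.toList.length < d := by
    rw [Finset.length_toList]
    omega
  have hfF : ∀ j : Fin d, S.toList.getD (j : ℕ) G0 ∈ F := by
    intro j
    by_cases h : (j : ℕ) < S.toList.length
    · rw [List.getD_eq_getElem S.toList G0 h]
      exact hSF (Finset.mem_toList.1 (List.getElem_mem _))
    · rw [List.getD_eq_default S.toList G0 (by omega)]
      exact hGF hG0G
  obtain ⟨x, hx⟩ := hInt (fun j => S.toList.getD (j : ℕ) G0) hfF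
  have hxG0 : x ∈ G0 := by
    have h9 : x ∈ S.toList.getD (d - 1) G0 := hx ⟨d - 1, by omega⟩
    rwa [List.getD_eq_default S.toList G0 (by omega)] at h9
  have hxS : ∀ A ∈ S, x ∈ A := by
    intro A hA
    obtain ⟨j, hj, hjA⟩ := List.mem_iff_getElem.1 (Finset.mem_toList.2 hA)
    have h9 : x ∈ S.toList.getD j G0 := hx ⟨j, by omega⟩
    rwa [List.getD_eq_getElem S.toList G0 hj, hjA] at h9
  have hxX : x ∈ X := hG0X (Finset.mem_inter.2 ⟨hxG0, hxS A1 hA1S⟩)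
  obtain ⟨B, hBS, hxB⟩ := hSexcl x hxX
  exact hxB (hxS B hBS)

lemma exists_min15 : ∀ m : ℕ, ∀ X ∈ Bone n k d F, X.card ≤ m →
    ∃ Y ∈ Btwo n k d F, Y ⊆ X := by
  intro m
  induction m with
  | zero =>
    intro X hX hm
    by_cases h : ∀ Y ∈ Bone n k d F, Y ⊆ X → Y = X
    · exact ⟨X, Finset.mem_filter.2 ⟨hX, h⟩, Finset.Subset.refl X⟩
    · push_neg at h
      obtain ⟨Y, hY, hYX, hne⟩ := h
      exfalso
      apply hne
      have hX0 : X = ∅ := Finset.card_eq_zero.1 (by omega)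
      rw [hX0] at hYX ⊢
      exact Finset.subset_empty.1 hYX
  | succ m ih =>
    intro X hX hm
    by_cases h : ∀ Y ∈ Bone n k d F, Y ⊆ X → Y = X
    · exact ⟨X, Finset.mem_filter.2 ⟨hX, h⟩, Finset.Subset.refl X⟩
    · push_neg at h
      obtain ⟨Y, hY, hYX, hne⟩ := h
      have hlt : Y.card < X.card :=
        Finset.card_lt_card (Finset.ssubset_iff_subset_ne.2 ⟨hYX, hne⟩)
      obtain ⟨Z, hZ, hZY⟩ := ih Y hY (by omega)
      exact ⟨Z, hZ, hZY.trans hYX⟩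

lemma greedy15 (hk1 : 1 ≤ k) (hFam : FamilyOn n k F)
    {D : Finset (Finset ℕ)} {X : Finset ℕ} (m : ℕ)
    (hD2 : 2 ≤ D.card)
    (hDsun : IsSunflower D X)
    (hcards : ∀ T ∈ D, T.card ≤ k)
    (hwit : ∀ T ∈ D, ∃ W : Finset (Finset ℕ), W ⊆ F ∧ W.card = m ∧ IsSunflower W T)
    (hmk : D.card * k ≤ m) :
    ∃ G : Finset (Finset ℕ), G ⊆ F ∧ G.card = D.card ∧ IsSunflower G X := by
  have hXD : ∀ T ∈ D, X ⊆ T := kernel_subset15 hDsun hD2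
  have main : ∀ E : Finset (Finset ℕ), E ⊆ D → ∃ φ : Finset ℕ → Finset ℕ,
      (∀ T ∈ E, φ T ∈ F ∧ T ⊆ φ T ∧ ∀ T' ∈ D, T' ≠ T → φ T ∩ T' = X) ∧
      (∀ T ∈ E, ∀ T' ∈ E, T ≠ T' → φ T ∩ φ T' = X) := by
    intro E
    induction E using Finset.induction_on with
    | empty => exact fun _ => ⟨id, by simp, by simp⟩
    | @insert T E' hTE' ih =>
      intro hE
      have hTD : T ∈ D := hE (Finset.mem_insert_self _ _)
      have hE'D : E' ⊆ D := fun A hA => hE (Finset.mem_insert_of_mem hA)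
      obtain ⟨φ, hφ1, hφ2⟩ := ih hE'D
      obtain ⟨W, hWF, hWcard, hWsun⟩ := hwit T hTD
      have hW2 : 2 ≤ W.card := by
        have h21 : 2 * 1 ≤ D.card * k := Nat.mul_le_mul hD2 hk1
        omega
      have hWT : ∀ A ∈ W, T ⊆ A := kernel_subset15 hWsun hW2
      set Z : Finset ℕ := (D.erase T).biUnion (fun T' => if T' ∈ E' then φ T' else T') with hZ
      have hZcard : Z.card ≤ (D.card - 1) * k := by
        calc Z.card ≤ ∑ T' ∈ D.erase T, (if T' ∈ E' then φ T' else T').card :=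
              Finset.card_biUnion_le
          _ ≤ ∑ _T' ∈ D.erase T, k := by
              refine Finset.sum_le_sum ?_
              intro T' hT'
              split_ifs with h
              · exact le_of_eq (hFam _ (hφ1 T' h).1).2
              · exact hcards T' (Finset.mem_of_mem_erase hT')
          _ = (D.erase T).card * k := by rw [Finset.sum_const, smul_eq_mul]
          _ = (D.card - 1) * k := by rw [Finset.card_erase_of_mem hTD]
      have hTZ : T ∩ Z ⊆ X := by
        intro z hz
        obtain ⟨hzT, hzZ⟩ := Finset.mem_inter.1 hz
        rw [hZ] at hzZ
        obtain ⟨T'', hT''mem, hzg⟩ := Finset.mem_biUnion.1 hzZ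
        have hT''ne : T'' ≠ T := Finset.ne_of_mem_erase hT''mem
        have hT''D : T'' ∈ D := Finset.mem_of_mem_erase hT''mem
        by_cases h : T'' ∈ E'
        · rw [if_pos h] at hzg
          have heq := (hφ1 T'' h).2.2 T hTD (fun he => hT''ne he.symm)
          exact heq ▸ Finset.mem_inter.2 ⟨hzg, hzT⟩
        · rw [if_neg h] at hzg
          have heq := hDsun T hTD T'' hT''D (fun he => hT''ne he.symm)
          exact heq ▸ Finset.mem_inter.2 ⟨hzT, hzg⟩
      set bad : Finset (Finset ℕ) := W.filter (fun A => ((A \ T) ∩ Z).Nonempty) with hbad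
      have honeW : ∀ z : ℕ, (W.filter (fun A => z ∈ A \ T)).card ≤ 1 := by
        intro z
        rw [Finset.card_le_one]
        intro A hA B hB
        rw [Finset.mem_filter, Finset.mem_sdiff] at hA hB
        by_contra hne
        have heq := hWsun A hA.1 B hB.1 hne
        exact hA.2.2 (heq ▸ Finset.mem_inter.2 ⟨hA.2.1, hB.2.1⟩)
      have hbadsub : bad ⊆ Z.biUnion (fun z => W.filter (fun A => z ∈ A \ T)) := by
        intro A hA
        rw [hbad, Finset.mem_filter] at hA
        obtain ⟨hAW, z, hz⟩ := hA
        rw [Finset.mem_inter] at hz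
        exact Finset.mem_biUnion.2 ⟨z, hz.2, Finset.mem_filter.2 ⟨hAW, hz.1⟩⟩
      have hstrict : (D.card - 1) * k < D.card * k := by
        have h1 : (D.card - 1) * k + 1 * k ≤ D.card * k := by
          rw [← Nat.add_mul]
          exact Nat.mul_le_mul_right k (by omega)
        omega
      have hbadlt : bad.card < W.card := by
        calc bad.card ≤ _ := Finset.card_le_card hbadsub
          _ ≤ ∑ z ∈ Z, (W.filter (fun A => z ∈ A \ T)).card := Finset.card_biUnion_le
          _ ≤ ∑ _z ∈ Z, 1 := Finset.sum_le_sum (fun z _ => honeW z)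
          _ = Z.card := by simp
          _ ≤ (D.card - 1) * k := hZcard
          _ < D.card * k := hstrict
          _ ≤ W.card := hWcard ▸ hmk
      have hpos : 0 < (W \ bad).card := by
        rw [Finset.card_sdiff_of_subset (show bad ⊆ W by rw [hbad]; exact Finset.filter_subset _ _)]
        omega
      obtain ⟨A, hA⟩ := Finset.card_pos.1 hpos
      obtain ⟨hAW, hAnb⟩ := Finset.mem_sdiff.1 hA
      have hApet : (A \ T) ∩ Z = ∅ := by
        by_contra h
        exact hAnb (Finset.mem_filter.2 ⟨hAW, Finset.nonempty_iff_ne_empty.2 h⟩)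
      have hAZ : A ∩ Z ⊆ X := by
        intro z hz
        obtain ⟨hzA, hzZ⟩ := Finset.mem_inter.1 hz
        by_cases hzT : z ∈ T
        · exact hTZ (Finset.mem_inter.2 ⟨hzT, hzZ⟩)
        · exfalso
          have hmem : z ∈ (A \ T) ∩ Z :=
            Finset.mem_inter.2 ⟨Finset.mem_sdiff.2 ⟨hzA, hzT⟩, hzZ⟩
          rw [hApet] at hmem
          exact absurd hmem (Finset.notMem_empty z)
      have hTA : T ⊆ A := hWT A hAW
      have hXA : X ⊆ A := (hXD T hTD).trans hTA
      have key : ∀ T2 ∈ E', A ∩ φ T2 = X := by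
        intro T2 e2
        have hT2ne : T2 ≠ T := by rintro rfl; exact hTE' e2
        have hT2e : T2 ∈ D.erase T := Finset.mem_erase.2 ⟨hT2ne, hE'D e2⟩
        have hsub : φ T2 ⊆ Z := by
          have h0 : (if T2 ∈ E' then φ T2 else T2) ⊆ Z := by
            rw [hZ]
            exact Finset.subset_biUnion_of_mem (fun T' => if T' ∈ E' then φ T' else T') hT2e
          rwa [if_pos e2] at h0
        apply Finset.Subset.antisymm
        · intro z hz
          obtain ⟨hz1, hz2⟩ := Finset.mem_inter.1 hz
          exact hAZ (Finset.mem_inter.2 ⟨hz1, hsub hz2⟩)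
        · intro z hz
          exact Finset.mem_inter.2 ⟨hXA hz, (hφ1 T2 e2).2.1 (hXD T2 (hE'D e2) hz)⟩
      refine ⟨Function.update φ T A, ?_, ?_⟩
      · intro T'' hT''
        rcases Finset.mem_insert.1 hT'' with h | h
        · rw [h]
          rw [Function.update_self]
          refine ⟨hWF hAW, hTA, ?_⟩
          intro T' hT'D hT'ne
          have hT'e : T' ∈ D.erase T := Finset.mem_erase.2 ⟨hT'ne, hT'D⟩
          have hT'Z : T' ⊆ Z := by
            have h0 : (if T' ∈ E' then φ T' else T') ⊆ Z := by
              rw [hZ]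
              exact Finset.subset_biUnion_of_mem (fun Ta => if Ta ∈ E' then φ Ta else Ta) hT'e
            intro z hzz
            apply h0
            split_ifs with hc
            · exact (hφ1 T' hc).2.1 hzz
            · exact hzz
          apply Finset.Subset.antisymm
          · intro z hz
            obtain ⟨hz1, hz2⟩ := Finset.mem_inter.1 hz
            exact hAZ (Finset.mem_inter.2 ⟨hz1, hT'Z hz2⟩)
          · intro z hz
            exact Finset.mem_inter.2 ⟨hXA hz, hXD T' hT'D hz⟩
        · have hne : T'' ≠ T := by rintro rfl; exact hTE' h
          rw [Function.update_of_ne hne]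
          exact hφ1 T'' h
      · intro T1 h1 T2 h2 hne
        rcases Finset.mem_insert.1 h1 with e1 | e1 <;> rcases Finset.mem_insert.1 h2 with e2 | e2
        · exact absurd (e1.trans e2.symm) hne
        · rw [e1]
          have hne2 : T2 ≠ T := by rintro rfl; exact hTE' e2
          rw [Function.update_self, Function.update_of_ne hne2]
          exact key T2 e2
        · rw [e2]
          have hne1 : T1 ≠ T := by rintro rfl; exact hTE' e1
          rw [Function.update_self, Function.update_of_ne hne1, Finset.inter_comm]
          exact key T1 e1
        · have hne1 : T1 ≠ T := by rintro rfl; exact hTE' e1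
          have hne2 : T2 ≠ T := by rintro rfl; exact hTE' e2
          rw [Function.update_of_ne hne1, Function.update_of_ne hne2]
          exact hφ2 T1 e1 T2 e2 hne
  obtain ⟨φ, hφ1, hφ2⟩ := main D (Finset.Subset.refl D)
  refine ⟨D.image φ, ?_, ?_, ?_⟩
  · intro A hA
    obtain ⟨T, hT, rfl⟩ := Finset.mem_image.1 hA
    exact (hφ1 T hT).1
  · rw [Finset.card_image_of_injOn]
    intro T1 h1 T2 h2 heq
    rw [Finset.mem_coe] at h1 h2
    by_contra hne
    have h12 := hφ2 T1 h1 T2 h2 hne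
    rw [heq, Finset.inter_self] at h12
    have e2 : T2 = X := Finset.Subset.antisymm (h12 ▸ (hφ1 T2 h2).2.1) (hXD T2 h2)
    have e1 : T1 = X := by
      refine Finset.Subset.antisymm ?_ (hXD T1 h1)
      rw [← h12, ← heq]
      exact (hφ1 T1 h1).2.1
    exact hne (e1.trans e2.symm)
  · intro A hA B hB hne
    obtain ⟨T1, h1, rfl⟩ := Finset.mem_image.1 hA
    obtain ⟨T2, h2, rfl⟩ := Finset.mem_image.1 hB
    exact hφ2 T1 h1 T2 h2 (fun h => hne (by rw [h]))

end proof15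

theorem stmt15 (n k d : ℕ) (hd : 3 ≤ d) (hk : d < k)
    (F : Finset (Finset ℕ)) (hFam : FamilyOn n k F) (hInt : DWise d F)
    (hNT : NonTrivialFam F) :
    ∀ i, d + 1 ≤ i → i ≤ k →
      ¬ ∃ D ⊆ BI n k d i F, D.card = k ^ (i - d) ∧ ∃ X, IsSunflower D X := by
  intro i hi1 hi2 hcon
  obtain ⟨D, hDsub, hDcard, X, hDsun⟩ := hcon
  have hk1 : 1 ≤ k := by omega
  have hm : k ≤ k ^ (i - d) := Nat.le_self_pow (by omega) k
  have hD2 : 2 ≤ D.card := by rw [hDcard]; omega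
  have hmemBI : ∀ T ∈ D, T ∈ famB n k d F ∧ T.card = i := by
    intro T hT
    have h0 := hDsub hT
    rw [BI, Finset.mem_filter] at h0
    exact h0
  have hXD : ∀ T ∈ D, X ⊆ T := kernel_subset15 hDsun hD2
  have hXlt : X.card < i := by
    obtain ⟨T0, hT0⟩ := Finset.card_pos.1 (by omega : 0 < D.card)
    obtain ⟨T1, hT1, hT10⟩ := Finset.exists_mem_ne (s := D) (by omega) T0
    have hXT0 : X ⊆ T0 := hXD T0 hT0
    have hne : X ≠ T0 := by
      intro hXeq
      have h01 := hDsun T0 hT0 T1 hT1 (fun h => hT10 h.symm)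
      rw [hXeq] at h01
      have hsub : T0 ⊆ T1 := fun z hz => (Finset.mem_inter.1 (by rw [h01]; exact hz)).2
      have heq := Finset.eq_of_subset_of_card_le hsub
        (by rw [(hmemBI T1 hT1).2, (hmemBI T0 hT0).2])
      exact hT10 heq.symm
    have hlt := Finset.card_lt_card (Finset.ssubset_iff_subset_ne.2 ⟨hXT0, hne⟩)
    rwa [(hmemBI T0 hT0).2] at hlt
  have hG : ∃ G : Finset (Finset ℕ), G ⊆ F ∧ G.card = k ^ (i - d) ∧ IsSunflower G X := by
    by_cases hik : i < k
    · have hwit : ∀ T ∈ D, ∃ W : Finset (Finset ℕ),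
          W ⊆ F ∧ W.card = k ^ (i - d + 1) ∧ IsSunflower W T := by
        intro T hT
        obtain ⟨hTB, hTc⟩ := hmemBI T hT
        rw [famB, Finset.mem_union] at hTB
        rcases hTB with h | h
        · rw [Btwo, Finset.mem_filter, Bone, Finset.mem_filter] at h
          obtain ⟨⟨_, _, _, W, hW1, hW2, hW3⟩, -⟩ := h
          rw [Finset.mem_powerset] at hW1
          refine ⟨W, hW1, ?_, hW3⟩
          rw [hW2, hTc]
        · exfalso
          rw [Bthree, Finset.mem_filter] at h
          have hck := (hFam T h.1).2
          omega
      obtain ⟨G, h1, h2, h3⟩ := greedy15 hk1 hFam (k ^ (i - d + 1)) hD2 hDsun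
        (fun T hT => le_of_lt (by rw [(hmemBI T hT).2]; exact hik)) hwit
        (by rw [hDcard, ← pow_succ])
      exact ⟨G, h1, by rw [h2, hDcard], h3⟩
    · refine ⟨D, ?_, hDcard, hDsun⟩
      intro T hT
      obtain ⟨hTB, hTc⟩ := hmemBI T hT
      rw [famB, Finset.mem_union] at hTB
      rcases hTB with h | h
      · exfalso
        rw [Btwo, Finset.mem_filter, Bone, Finset.mem_filter] at h
        obtain ⟨⟨_, _, hlt, _⟩, -⟩ := h
        omega
      · rw [Bthree, Finset.mem_filter] at h
        exact h.1
  obtain ⟨G, hGF, hGcard, hGsun⟩ := hG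
  have hkG : k ≤ G.card := by rw [hGcard]; exact hm
  have hXd : d ≤ X.card := small_kernel15 hd hk hFam hInt hNT hGF hGsun hkG
  have hG2 : 2 ≤ G.card := by omega
  have hXBone : X ∈ Bone n k d F := by
    rw [Bone, Finset.mem_filter]
    refine ⟨?_, hXd, by omega, ?_⟩
    · rw [Finset.mem_powerset]
      obtain ⟨A, hA⟩ := Finset.card_pos.1 (by omega : 0 < G.card)
      exact (kernel_subset15 hGsun hG2 A hA).trans (hFam A (hGF hA)).1
    · have hle : k ^ (X.card - d + 1) ≤ G.card := by
        rw [hGcard]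
        exact Nat.pow_le_pow_right hk1 (by omega)
      obtain ⟨W, hWG, hWc⟩ := Finset.exists_subset_card_eq hle
      refine ⟨W, Finset.mem_powerset.2 (hWG.trans hGF), hWc, ?_⟩
      intro A hA B hB hne
      exact hGsun A (hWG hA) B (hWG hB) hne
  obtain ⟨Y, hYB2, hYX⟩ := exists_min15 X.card X hXBone (le_refl _)
  obtain ⟨T0, hT0⟩ := Finset.card_pos.1 (by omega : 0 < D.card)
  obtain ⟨hT0B, hT0c⟩ := hmemBI T0 hT0
  have hYT0 : Y ⊆ T0 := hYX.trans (hXD T0 hT0)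
  rw [famB, Finset.mem_union] at hT0B
  rcases hT0B with h | h
  · rw [Btwo, Finset.mem_filter] at h
    have heq := h.2 Y (Finset.mem_filter.1 hYB2).1 hYT0
    have hYc : Y.card ≤ X.card := Finset.card_le_card hYX
    rw [heq] at hYc
    omega
  · rw [Bthree, Finset.mem_filter] at h
    exact h.2 Y hYB2 hYT0
end
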